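/- arXiv:2508.21603 — 8 statements merged into one kernel-verified Lean document; each statement's English description precedes it below -/
import Mathlib

section
/- Let λ ∈ k with λ ≠ 0, λ ≠ 1 and λ ≠ −1, and let a ∈ k with a ≠ 0. Then the O-module Ω(λ,a) is irreducible. -/
/-!
Let `0 ≠ f ∈ N` with `N` stable. Then `O_n · f = λⁿ A(n) + λ⁻ⁿ B(n)`, where `A` and `B` are
polynomials in `n` over `k[X]` and the leading coefficient of `A` is the nonzero constant
`a · lc f`. For such a sequence with values in `N`, the leading coefficient of `A` lies in `N`:
the finite difference `u(n) ↦ u(n + 1) - λ⁻¹ u(n)` lowers the degree of the `λ⁻ⁿ`-part while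
only rescaling the leading coefficient of the `λⁿ`-part by `λ - λ⁻¹ ≠ 0`, and once the `λ⁻ⁿ`-part
is gone a Vandermonde argument reads off the coefficients. So `N` contains a nonzero constant.
Since `O_1` multiplies leading coefficients by `λ - λ⁻¹` and raises degrees by one, `N` then
contains a polynomial of every degree, hence is all of `k[X]`.
-/

open Polynomial

namespace Polynomial

variable {k R : Type*} [Field k] [CommRing R] [Algebra k R]

theorem coeff_mem_of_forall_eval_mem (N : Submodule k R) {m : ℕ} {x : Fin m → k}
    (hx : Function.Injective x) {A : R[X]} (hA : A.natDegree < m)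
    (hN : ∀ j, A.eval (algebraMap k R (x j)) ∈ N) (i : ℕ) : A.coeff i ∈ N := by
  rcases lt_or_ge i m with hi | hi
  swap
  · rw [coeff_eq_zero_of_natDegree_lt (hA.trans_le hi)]
    exact N.zero_mem
  by_contra hAi
  obtain ⟨ℓ, hℓi, hℓN⟩ := N.exists_dual_map_eq_bot_of_notMem hAi inferInstance
  suffices (fun i : Fin m => ℓ (A.coeff i)) = 0 from hℓi (congrFun this ⟨i, hi⟩)
  refine Matrix.eq_zero_of_forall_index_sum_mul_pow_eq_zero hx fun j => ?_
  have hj : ℓ (A.eval (algebraMap k R (x j))) = 0 := by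
    simpa [hℓN] using Submodule.mem_map_of_mem (f := ℓ) (hN j)
  rw [eval_eq_sum_range' hA, ← Fin.sum_univ_eq_sum_range, map_sum] at hj
  simp_rw [← map_pow, ← Algebra.commutes, ← Algebra.smul_def, map_smul, smul_eq_mul] at hj
  simpa only [mul_comm] using hj

section SmulSubSmul

variable {lam mu : k} {p q : R[X]}

theorem coeff_smul_sub_smul_natDegree (hd : q.natDegree = p.natDegree)
    (hlc : q.leadingCoeff = p.leadingCoeff) :
    (lam • p - mu • q).coeff p.natDegree = (lam - mu) • p.leadingCoeff := by
  rw [coeff_sub, coeff_smul, coeff_smul, ← hd, coeff_natDegree, hlc, hd, coeff_natDegree,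
    sub_smul]

theorem natDegree_smul_sub_smul_le (lam mu : k) (hd : q.natDegree = p.natDegree) :
    (lam • p - mu • q).natDegree ≤ p.natDegree :=
  (natDegree_sub_le _ _).trans <| max_le (natDegree_smul_le _ _) (hd ▸ natDegree_smul_le _ _)

theorem leadingCoeff_smul_sub_smul (h : lam ≠ mu) (hd : q.natDegree = p.natDegree)
    (hlc : q.leadingCoeff = p.leadingCoeff) :
    (lam • p - mu • q).leadingCoeff = (lam - mu) • p.leadingCoeff := by
  rcases eq_or_ne p.leadingCoeff 0 with hp | hp
  · simp [leadingCoeff_eq_zero.mp hp, leadingCoeff_eq_zero.mp (hlc.trans hp)]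
  rw [leadingCoeff, natDegree_eq_of_le_of_coeff_ne_zero (natDegree_smul_sub_smul_le lam mu hd)
    (by rw [coeff_smul_sub_smul_natDegree hd hlc]; exact smul_ne_zero (sub_ne_zero.mpr h) hp),
    coeff_smul_sub_smul_natDegree hd hlc]

theorem degree_smul_sub_smul (h : lam ≠ mu) (hp : p.leadingCoeff ≠ 0)
    (hd : q.natDegree = p.natDegree) (hlc : q.leadingCoeff = p.leadingCoeff) :
    (lam • p - mu • q).degree = p.degree := by
  rw [degree_eq_natDegree (leadingCoeff_ne_zero.mp hp)]
  refine degree_eq_of_le_of_coeff_ne_zero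
    (degree_le_of_natDegree_le (natDegree_smul_sub_smul_le lam mu hd)) ?_
  rw [coeff_smul_sub_smul_natDegree hd hlc]
  exact smul_ne_zero (sub_ne_zero.mpr h) hp

end SmulSubSmul

theorem leadingCoeff_mem_of_forall_pow_smul_eval_add_mem [CharZero k] (N : Submodule k R)
    {lam mu : k} (hlam : lam ≠ 0) (hne : lam ≠ mu) {A B : R[X]}
    (hAB : ∀ n : ℕ, 1 ≤ n → lam ^ n • A.eval (n : R) + mu ^ n • B.eval (n : R) ∈ N) :
    A.leadingCoeff ∈ N := by
  induction B using degree_lt_wf.induction generalizing A with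
  | _ B ih =>
  rcases eq_or_ne B 0 with rfl | hB
  · have hA : ∀ n : ℕ, 1 ≤ n → A.eval (n : R) ∈ N := fun n hn => by
      simpa [Submodule.smul_mem_iff _ (pow_ne_zero n hlam)] using hAB n hn
    exact coeff_mem_of_forall_eval_mem N (x := fun j : Fin (A.natDegree + 1) => (j + 1 : k))
      (fun i j hij => by simpa [Fin.ext_iff] using hij) (Nat.lt_succ_self _)
      (fun j => by simpa using hA (j + 1) (Nat.succ_pos _)) _
  have hstep : ∀ n : ℕ, 1 ≤ n → lam ^ n • (lam • taylor 1 A - mu • A).eval (n : R) +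
      mu ^ n • (mu • (taylor 1 B - B)).eval (n : R) ∈ N := by
    intro n hn
    have hdiff : lam ^ n • (lam • taylor 1 A - mu • A).eval (n : R) +
        mu ^ n • (mu • (taylor 1 B - B)).eval (n : R) =
        (lam ^ (n + 1) • A.eval ((n + 1 : ℕ) : R) + mu ^ (n + 1) • B.eval ((n + 1 : ℕ) : R)) -
          mu • (lam ^ n • A.eval (n : R) + mu ^ n • B.eval (n : R)) := by
      simp only [eval_sub, eval_smul, taylor_eval]
      push_cast
      module
    rw [hdiff]
    exact N.sub_mem (hAB _ (by omega)) (N.smul_mem _ (hAB n hn))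
  have hdeg : (mu • (taylor 1 B - B)).degree < B.degree :=
    (degree_smul_le _ _).trans_lt
      (degree_sub_lt_right (degree_taylor B 1) hB (leadingCoeff_taylor 1 B))
  have hmem := ih _ hdeg hstep
  rwa [leadingCoeff_smul_sub_smul hne (natDegree_taylor A 1).symm (leadingCoeff_taylor 1 A).symm,
    leadingCoeff_taylor, Submodule.smul_mem_iff _ (sub_ne_zero.mpr hne)] at hmem

theorem eq_top_of_forall_exists_degree_eq {N : Submodule k k[X]}
    (h : ∀ d : ℕ, ∃ g ∈ N, g.degree = d) : N = ⊤ := by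
  refine Submodule.eq_top_iff'.mpr fun p => ?_
  induction p using degree_lt_wf.induction with
  | _ p ih =>
  rcases eq_or_ne p 0 with rfl | hp
  · exact N.zero_mem
  obtain ⟨g, hgN, hg⟩ := h p.natDegree
  have hg0 : g.leadingCoeff ≠ 0 := by
    rw [Ne, leadingCoeff_eq_zero]
    rintro rfl
    simp at hg
  set c := p.leadingCoeff / g.leadingCoeff
  have hlc : (C c * g).leadingCoeff = p.leadingCoeff := by
    rw [leadingCoeff_mul, leadingCoeff_C, div_mul_cancel₀ _ hg0]
  have hdeg : p.degree = (C c * g).degree := by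
    rw [degree_C_mul (div_ne_zero (leadingCoeff_ne_zero.mpr hp) hg0), hg, degree_eq_natDegree hp]
  rw [← sub_add_cancel p (C c * g)]
  refine N.add_mem (ih _ (degree_sub_lt_left hdeg hp hlc.symm)) ?_
  rw [← smul_eq_C_mul]
  exact N.smul_mem _ hgN

end Polynomial

namespace OmegaModule

variable {k : Type*} [Field k]

noncomputable section

def act (lam a : k) (n : ℕ) (f : k[X]) : k[X] :=
  lam ^ n • ((X + C ((n : k) * a)) * f.comp (X + C (n : k)))
    - (lam ^ n)⁻¹ • ((X - C ((n : k) * a)) * f.comp (X - C (n : k)))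

/- In `k[X][X]` the outer variable stands for `n` and the inner one for `X`. -/

def plusPart (a : k) (f : k[X]) : k[X][X] := (C (C a) * X + C X) * taylor X (f.map C)

def minusPart (a : k) (f : k[X]) : k[X][X] := (C (C a) * X - C X) * (f.map C).comp (C X - X)

theorem act_eq_eval (lam a : k) (n : ℕ) (f : k[X]) :
    act lam a n f = lam ^ n • (plusPart a f).eval (n : k[X]) +
      lam⁻¹ ^ n • (minusPart a f).eval (n : k[X]) := by
  rw [← map_natCast C n]
  simp only [act, plusPart, minusPart, eval_mul, eval_add, eval_sub, eval_C, eval_X,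
    taylor_eval, eval_comp, eval_map, inv_pow]
  rw [add_comm (C (n : k)) X, mul_comm (C a), ← C_mul, add_comm _ X, ← neg_sub X, neg_mul,
    smul_neg, ← sub_eq_add_neg]
  rfl

theorem leadingCoeff_plusPart {a : k} (ha : a ≠ 0) (f : k[X]) :
    (plusPart a f).leadingCoeff = C (a * f.leadingCoeff) := by
  rw [plusPart, leadingCoeff_mul, leadingCoeff_linear (C_ne_zero.mpr ha), leadingCoeff_taylor,
    leadingCoeff_map_of_injective C_injective, C_mul]

theorem C_mul_leadingCoeff_mem [CharZero k] {lam a : k} (hlam0 : lam ≠ 0) (hlam : lam ≠ lam⁻¹)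
    (ha : a ≠ 0) {N : Submodule k k[X]} (hN : ∀ n : ℕ, 1 ≤ n → ∀ f ∈ N, act lam a n f ∈ N)
    {f : k[X]} (hf : f ∈ N) : C (a * f.leadingCoeff) ∈ N := by
  rw [← leadingCoeff_plusPart ha]
  refine leadingCoeff_mem_of_forall_pow_smul_eval_add_mem N hlam0 hlam (B := minusPart a f)
    fun n hn => ?_
  rw [← act_eq_eval]
  exact hN n hn f hf

theorem act_one (lam a : k) (g : k[X]) :
    act lam a 1 g = lam • ((X + C a) * taylor 1 g) - lam⁻¹ • ((X + C (-a)) * taylor (-1) g) := by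
  simp [act, taylor_apply, sub_eq_add_neg]

theorem degree_act_one {lam : k} (hlam : lam ≠ lam⁻¹) (a : k) {g : k[X]} (hg : g ≠ 0) :
    (act lam a 1 g).degree = g.degree + 1 := by
  have hdeg (c b : k) : ((X + C c) * taylor b g).natDegree = g.natDegree + 1 := by
    rw [natDegree_mul (X_add_C_ne_zero c) ((taylor_eq_zero b g).not.mpr hg), natDegree_X_add_C,
      natDegree_taylor, add_comm]
  have hlc (c b : k) : ((X + C c) * taylor b g).leadingCoeff = g.leadingCoeff := by
    rw [leadingCoeff_mul, leadingCoeff_X_add_C, leadingCoeff_taylor, one_mul]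
  rw [act_one, degree_smul_sub_smul hlam (by rw [hlc]; exact leadingCoeff_ne_zero.mpr hg)
    (by rw [hdeg, hdeg]) (by rw [hlc, hlc]), degree_mul, degree_X_add_C, degree_taylor, add_comm]

end

end OmegaModule

/-- Let `k` be a field of characteristic zero, `lam ∈ k` with `lam ≠ 0, 1, -1`, and `a ∈ k` with
`a ≠ 0`.  `Ω(lam,a)` is the `O`-module with underlying space `k[X]` and action
`O_n · f(X) = lamⁿ (X + n·a) f(X + n) − lam⁻ⁿ (X − n·a) f(X − n)` for `n ≥ 1`
(here `act n f` records this action; since `O` is spanned by the `O_n`, `n ≥ 1`, subspaces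
stable under all `act n` are exactly the `O`-submodules).  Then `Ω(lam,a)` is irreducible:
it is nonzero and has no `O`-submodules other than `0` and itself. -/
theorem Omega_module_irreducible
    {k : Type*} [Field k] [CharZero k]
    (lam a : k) (hlam0 : lam ≠ 0) (hlam1 : lam ≠ 1) (hlamm1 : lam ≠ -1) (ha : a ≠ 0)
    (act : ℕ → Polynomial k → Polynomial k)
    (hact : ∀ (n : ℕ) (f : Polynomial k), act n f =
      lam ^ n • ((Polynomial.X + Polynomial.C ((n : k) * a)) *
          f.comp (Polynomial.X + Polynomial.C (n : k)))
        - (lam ^ n)⁻¹ • ((Polynomial.X - Polynomial.C ((n : k) * a)) *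
          f.comp (Polynomial.X - Polynomial.C (n : k)))) :
    Nontrivial (Polynomial k) ∧
      ∀ N : Submodule k (Polynomial k),
        (∀ n : ℕ, 1 ≤ n → ∀ f ∈ N, act n f ∈ N) → N = ⊥ ∨ N = ⊤ := by
  obtain rfl : act = OmegaModule.act lam a := funext fun n => funext (hact n)
  have hlam : lam ≠ lam⁻¹ := by rw [Ne, self_eq_inv₀]; tauto
  refine ⟨inferInstance, fun N hN => or_iff_not_imp_left.mpr fun hbot => ?_⟩
  obtain ⟨f, hfN, hf⟩ := (Submodule.ne_bot_iff N).mp hbot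
  refine eq_top_of_forall_exists_degree_eq fun d => ?_
  induction d with
  | zero =>
    exact ⟨_, OmegaModule.C_mul_leadingCoeff_mem hlam0 hlam ha hN hfN,
      degree_C (mul_ne_zero ha (leadingCoeff_ne_zero.mpr hf))⟩
  | succ d ih =>
    obtain ⟨g, hgN, hg⟩ := ih
    have hg0 : g ≠ 0 := by rintro rfl; simp at hg
    exact ⟨_, hN 1 le_rfl g hgN, by rw [OmegaModule.degree_act_one hlam a hg0, hg]; rfl⟩
end

section
/- Let μ ∈ k with μ ≠ 0 and μ ≠ 1, let r be a positive integer and u a non-negative integer, and set k_j := u + j for 1 ≤ j ≤ 2r. Let M be the 2r × 2r matrix whose (j,q) entry is k_j^{q−1} for 1 ≤ q ≤ r and μ^{k_j}·k_j^{q−r−1} for r+1 ≤ q ≤ 2r. Then det M ≠ 0. -/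
open Polynomial


section Aux

variable {k : Type*} [Field k] [CharZero k]

private noncomputable def Dop (P : k[X]) : k[X] := P.comp (X + 1) - P

private noncomputable def Sop (μ : k) (Q : k[X]) : k[X] := C μ * (Q.comp (X + 1)) - Q

private lemma natDegree_comp_X_add_one (P : k[X]) : (P.comp (X + 1)).natDegree = P.natDegree := by
  have : (X + (1 : k[X])) = X + C 1 := by simp
  rw [this, ← taylor_apply, natDegree_taylor]

private lemma leadingCoeff_comp_X_add_one (P : k[X]) :
    (P.comp (X + 1)).leadingCoeff = P.leadingCoeff := by
  rcases eq_or_ne P 0 with rfl | hP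
  · simp
  · have h1 : (X + (1 : k[X])).natDegree = 1 := by
      simpa using natDegree_X_add_C (1 : k)
    rw [leadingCoeff_comp (by rw [h1]; norm_num)]
    have h2 : (X + (1 : k[X])).leadingCoeff = 1 := by
      simpa using (monic_X_add_C (1 : k)).leadingCoeff
    simp [h2]

private lemma comp_X_add_one_ne_zero {P : k[X]} (hP : P ≠ 0) : P.comp (X + 1) ≠ 0 := by
  intro h
  apply hP
  rw [← leadingCoeff_eq_zero, ← leadingCoeff_comp_X_add_one, h, leadingCoeff_zero]

private lemma degree_comp_X_add_one (P : k[X]) : (P.comp (X + 1)).degree = P.degree := by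
  rcases eq_or_ne P 0 with rfl | hP
  · simp
  · rw [degree_eq_natDegree (comp_X_add_one_ne_zero hP), degree_eq_natDegree hP,
      natDegree_comp_X_add_one]

private lemma Dop_degree_lt {P : k[X]} (hP : P ≠ 0) : (Dop P).degree < P.degree := by
  have h := degree_sub_lt (degree_comp_X_add_one P) (comp_X_add_one_ne_zero hP)
    (leadingCoeff_comp_X_add_one P)
  rw [degree_comp_X_add_one] at h
  exact h

private lemma Dop_iterate_eq_zero : ∀ (n : ℕ) (P : k[X]), P.degree < (n : ℕ) → Dop^[n] P = 0 := by
  intro n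
  induction n with
  | zero =>
    intro P hP
    have : P = 0 := by
      by_contra h
      exact absurd (zero_le_degree_iff.mpr h) (not_le.mpr (by simpa using hP))
    simpa using this
  | succ n ih =>
    intro P hP
    rw [Function.iterate_succ_apply]
    apply ih
    rcases eq_or_ne P 0 with rfl | hPne
    · have : Dop (0 : k[X]) = 0 := by simp [Dop]
      rw [this]
      simp [bot_lt_iff_ne_bot]
    · have h1 : P.natDegree ≤ n := by
        have := (natDegree_lt_iff_degree_lt hPne).mpr (by exact_mod_cast hP)
        omega
      calc (Dop P).degree < P.degree := Dop_degree_lt hPne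
        _ = (P.natDegree : WithBot ℕ) := degree_eq_natDegree hPne
        _ ≤ (n : WithBot ℕ) := by exact_mod_cast h1

private lemma Top_ne_zero {μ : k} (hμ1 : μ ≠ 1) {Q : k[X]} (hQ : Q ≠ 0) : Sop μ Q ≠ 0 := by
  intro h
  have hc : (Sop μ Q).coeff Q.natDegree = (μ - 1) * Q.leadingCoeff := by
    have h1 : (Q.comp (X + 1)).coeff Q.natDegree = Q.leadingCoeff := by
      rw [← natDegree_comp_X_add_one Q, coeff_natDegree, leadingCoeff_comp_X_add_one]
    simp [Sop, coeff_sub, coeff_C_mul, h1, coeff_natDegree]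
    ring
  rw [h] at hc
  simp only [coeff_zero] at hc
  have := mul_ne_zero (sub_ne_zero.mpr hμ1) (leadingCoeff_ne_zero.mpr hQ)
  exact this hc.symm

private lemma Top_degree_le (μ : k) (Q : k[X]) : (Sop μ Q).degree ≤ Q.degree := by
  apply (degree_sub_le _ _).trans
  simp only [max_le_iff, le_refl, and_true]
  rcases eq_or_ne μ 0 with rfl | hμ
  · simp
  · rw [degree_C_mul hμ, degree_comp_X_add_one]

private lemma Sop_iterate (μ : k) (hμ1 : μ ≠ 1) {Q : k[X]} (hQ : Q ≠ 0) (i : ℕ) :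
    (Sop μ)^[i] Q ≠ 0 ∧ ((Sop μ)^[i] Q).degree ≤ Q.degree := by
  induction i with
  | zero => simpa using hQ
  | succ i ih =>
    rw [Function.iterate_succ_apply']
    exact ⟨Top_ne_zero hμ1 ih.1, (Top_degree_le μ _).trans ih.2⟩

private lemma eval_step (μ : k) (P Q : k[X]) (n : ℕ) :
    (Dop P).eval ((n : ℕ) : k) + μ ^ n * (Sop μ Q).eval ((n : ℕ) : k)
      = (P.eval (((n + 1 : ℕ) : k)) + μ ^ (n + 1) * Q.eval (((n + 1 : ℕ) : k)))
        - (P.eval ((n : ℕ) : k) + μ ^ n * Q.eval ((n : ℕ) : k)) := by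
  simp only [Dop, Sop, eval_sub, eval_comp, eval_mul, eval_add, eval_X, eval_one, eval_C]
  push_cast
  ring

private lemma key (μ : k) (hμ0 : μ ≠ 0) (hμ1 : μ ≠ 1) (r : ℕ) (hr : 0 < r)
    (P Q : k[X]) (hP : P.degree < (r : ℕ)) (hQ : Q.degree < (r : ℕ)) (m : ℕ)
    (h : ∀ j < 2 * r, P.eval (((m + j : ℕ) : k)) + μ ^ (m + j) * Q.eval (((m + j : ℕ) : k)) = 0) :
    P = 0 ∧ Q = 0 := by
  have main : ∀ i j, i + j < 2 * r →
      (Dop^[i] P).eval (((m + j : ℕ) : k))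
        + μ ^ (m + j) * ((Sop μ)^[i] Q).eval (((m + j : ℕ) : k)) = 0 := by
    intro i
    induction i with
    | zero => simpa using h
    | succ i ih =>
      intro j hj
      rw [Function.iterate_succ_apply', Function.iterate_succ_apply']
      have h1 := ih (j + 1) (by omega)
      have h2 := ih j (by omega)
      rw [eval_step μ _ _ (m + j)]
      have e : m + (j + 1) = (m + j) + 1 := by omega
      rw [e] at h1
      rw [h1, h2, sub_zero]
  have hinj : Function.Injective (fun j : Fin r => (((m + j : ℕ) : k))) := by
    intro a b hab
    have : (m + (a : ℕ) : ℕ) = (m + (b : ℕ) : ℕ) := Nat.cast_injective hab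
    exact Fin.ext (by omega)
  have hQ0 : Q = 0 := by
    by_contra hQne
    obtain ⟨hQr, hQrdeg⟩ := Sop_iterate μ hμ1 hQne r
    have hD : Dop^[r] P = 0 := Dop_iterate_eq_zero r P hP
    have heval : ∀ j : Fin r, ((Sop μ)^[r] Q).eval (((m + (j : ℕ) : ℕ) : k)) = 0 := by
      intro j
      have := main r j (by omega)
      rw [hD] at this
      simp only [eval_zero, zero_add] at this
      exact (mul_eq_zero.mp this).resolve_left (pow_ne_zero _ hμ0)
    have hnd : ((Sop μ)^[r] Q).natDegree < r := by
      rw [natDegree_lt_iff_degree_lt hQr]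
      exact lt_of_le_of_lt hQrdeg hQ
    have := eq_zero_of_natDegree_lt_card_of_eval_eq_zero ((Sop μ)^[r] Q) hinj heval
      (by simpa using hnd)
    exact hQr this
  refine ⟨?_, hQ0⟩
  have hinj2 : Function.Injective (fun j : Fin (2 * r) => (((m + j : ℕ) : k))) := by
    intro a b hab
    have : (m + (a : ℕ) : ℕ) = (m + (b : ℕ) : ℕ) := Nat.cast_injective hab
    exact Fin.ext (by omega)
  have hPnd : P.natDegree < 2 * r := by
    rcases eq_or_ne P 0 with rfl | hPne
    · simpa using by omega
    · have := (natDegree_lt_iff_degree_lt hPne).mpr hP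
      omega
  apply eq_zero_of_natDegree_lt_card_of_eval_eq_zero P hinj2 _ (by simpa using hPnd)
  intro j
  have := h j (j.isLt)
  rw [hQ0] at this
  simpa using this

end Aux

/-- Let `k` be a field of characteristic zero, `μ ∈ k` with `μ ≠ 0` and `μ ≠ 1`, `r` a positive
integer and `u` a non-negative integer.  Set `k_j := u + j` for `1 ≤ j ≤ 2r` (below, the row
index `j : Fin (2r)` corresponds to `k_j = u + j + 1`).  Let `M` be the `2r × 2r` matrix whose
`(j,q)` entry is `k_j^(q-1)` for `1 ≤ q ≤ r` and `μ^(k_j) · k_j^(q-r-1)` for `r+1 ≤ q ≤ 2r`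
(columns `q : Fin (2r)` below, with exponent `q` for `q < r` and `μ^(k_j) · k_j^(q-r)`
otherwise).  Then `det M ≠ 0`. -/
theorem det_vandermonde_like_ne_zero
    {k : Type*} [Field k] [CharZero k]
    (μ : k) (hμ0 : μ ≠ 0) (hμ1 : μ ≠ 1)
    (r : ℕ) (hr : 0 < r) (u : ℕ) :
    Matrix.det (Matrix.of fun j q : Fin (2 * r) =>
      if (q : ℕ) < r then ((u + (j : ℕ) + 1 : ℕ) : k) ^ (q : ℕ)
      else μ ^ (u + (j : ℕ) + 1) * ((u + (j : ℕ) + 1 : ℕ) : k) ^ ((q : ℕ) - r)) ≠ 0 := by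
  classical
  intro hdet
  obtain ⟨v, hv, hMv⟩ := Matrix.exists_mulVec_eq_zero_iff.mpr hdet
  set f : Fin r → k := fun i => v (Fin.cast (two_mul r).symm (i.castAdd r)) with hf
  set g : Fin r → k := fun i => v (Fin.cast (two_mul r).symm (i.natAdd r)) with hg
  set P : k[X] := ∑ i : Fin r, C (f i) * X ^ (i : ℕ) with hPdef
  set Q : k[X] := ∑ i : Fin r, C (g i) * X ^ (i : ℕ) with hQdef
  have split : ∀ (G : Fin (2 * r) → k),
      ∑ q, G q = ∑ i : Fin r, G (Fin.cast (two_mul r).symm (i.castAdd r))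
        + ∑ i : Fin r, G (Fin.cast (two_mul r).symm (i.natAdd r)) := by
    intro G
    rw [← Fin.sum_univ_add (fun i : Fin (r + r) => G (Fin.cast (two_mul r).symm i))]
    exact Fintype.sum_equiv (finCongr (two_mul r)) _ _ (fun x => rfl)
  have hkey : P = 0 ∧ Q = 0 := by
    apply key μ hμ0 hμ1 r hr P Q (degree_sum_fin_lt f) (degree_sum_fin_lt g) (u + 1)
    intro j hj
    have hMvj := congrFun hMv ⟨j, hj⟩
    simp only [Pi.zero_apply] at hMvj
    rw [Matrix.mulVec, dotProduct] at hMvj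
    rw [split] at hMvj
    have e : u + 1 + j = u + j + 1 := by omega
    rw [e]
    rw [← hMvj]
    congr 1
    · rw [hPdef, eval_finset_sum]
      apply Finset.sum_congr rfl
      intro i _
      simp only [Matrix.of_apply, Fin.coe_cast, Fin.coe_castAdd, i.isLt, if_pos]
      rw [eval_mul, eval_C, eval_pow, eval_X]
      ring
    · rw [hQdef, eval_finset_sum, Finset.mul_sum]
      apply Finset.sum_congr rfl
      intro i _
      have hni : ¬ ((r + (i : ℕ)) < r) := by omega
      simp only [Matrix.of_apply, Fin.coe_cast, Fin.coe_natAdd, hni, if_neg, not_false_iff]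
      rw [eval_mul, eval_C, eval_pow, eval_X]
      have : r + (i : ℕ) - r = (i : ℕ) := by omega
      rw [this]
      ring
  have coeffP : ∀ i : Fin r, f i = 0 := by
    intro i
    have := hkey.1
    rw [hPdef] at this
    have h2 := congrArg (fun p => Polynomial.coeff p (i : ℕ)) this
    simpa [finset_sum_coeff, coeff_C_mul, coeff_X_pow, Fin.val_eq_val] using h2
  have coeffQ : ∀ i : Fin r, g i = 0 := by
    intro i
    have := hkey.2
    rw [hQdef] at this
    have h2 := congrArg (fun p => Polynomial.coeff p (i : ℕ)) this
    simpa [finset_sum_coeff, coeff_C_mul, coeff_X_pow, Fin.val_eq_val] using h2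
  apply hv
  funext q
  by_cases hq : (q : ℕ) < r
  · have : q = Fin.cast (two_mul r).symm ((⟨(q : ℕ), hq⟩ : Fin r).castAdd r) := Fin.ext rfl
    rw [this]
    exact coeffP ⟨(q : ℕ), hq⟩
  · have hq2 : (q : ℕ) - r < r := by omega
    have : q = Fin.cast (two_mul r).symm ((⟨(q : ℕ) - r, hq2⟩ : Fin r).natAdd r) := by
      apply Fin.ext
      simp only [Fin.coe_cast, Fin.coe_natAdd]
      omega
    rw [this]
    exact coeffQ ⟨(q : ℕ) - r, hq2⟩
end

section
/- Let λ ∈ k with λ ≠ 0, λ ≠ 1 and λ ≠ −1, and let a ∈ k with a ≠ 0. Then the O-module Ω(λ,a) is generated by the constant polynomial 1; that is, U(O)·1 = k[X]. -/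
/-!
The operator `O_1` sends `f` to `λ (X + a) f(X + 1) - λ⁻¹ (X - a) f(X - 1)`. Both terms have
the leading coefficient of `f` in degree `deg f + 1`, so for `λ ≠ λ⁻¹`, i.e. `λ ∉ {0, 1, -1}`, the operator `O_1` raises the degree
by exactly one. Hence the iterates `O_1^i · 1` have degree `i`, and they span `k[X]`.
-/

open Polynomial

section Shift

variable {R : Type*} [CommRing R] [IsDomain R]

theorem Polynomial.degree_mul_comp_of_degree_eq_one (q : R[X]) {r : R[X]} (hr : r.degree = 1)
    (p : R[X]) : (q * p.comp r).degree = q.degree + p.degree := by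
  rw [degree_mul, degree_comp (by rw [hr]; exact zero_lt_one), hr, mul_one]

theorem Polynomial.leadingCoeff_mul_comp_of_monic {q r : R[X]} (hq : q.Monic) (hr : r.Monic)
    (hr1 : r.natDegree = 1) (p : R[X]) : (q * p.comp r).leadingCoeff = p.leadingCoeff := by
  rw [leadingCoeff_monic_mul hq, leadingCoeff_comp (by rw [hr1]; exact one_ne_zero),
    hr.leadingCoeff, one_pow, mul_one]

theorem Polynomial.degree_smul_sub_smul_of_leadingCoeff_eq {p q : R[X]} {c d : R} (hcd : c ≠ d)
    (hdeg : p.degree = q.degree) (hlc : p.leadingCoeff = q.leadingCoeff) :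
    (c • p - d • q).degree = p.degree := by
  rcases eq_or_ne p 0 with rfl | hp
  · rw [eq_comm, degree_zero, degree_eq_bot] at hdeg
    simp [hdeg]
  have hsplit : c • p - d • q = (c - d) • p + d • (p - q) := by
    simp only [sub_smul, smul_sub]
    abel
  have hcdp : ((c - d) • p).degree = p.degree :=
    degree_smul_of_isRightRegular_leadingCoeff (sub_ne_zero.2 hcd)
      (IsRegular.of_ne_zero (leadingCoeff_ne_zero.2 hp)).right
  have hlower : (d • (p - q)).degree < ((c - d) • p).degree :=
    hcdp ▸ (degree_smul_le d _).trans_lt (degree_sub_lt_left hdeg hp hlc)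
  rw [hsplit, degree_add_eq_left_of_degree_lt hlower, hcdp]

theorem Polynomial.degree_smul_sub_smul_X_add_C_mul_comp {c d : R} (hcd : c ≠ d)
    (b b' e e' : R) (f : R[X]) :
    (c • ((X + C b) * f.comp (X + C e)) - d • ((X + C b') * f.comp (X + C e'))).degree =
      f.degree + 1 := by
  rw [degree_smul_sub_smul_of_leadingCoeff_eq hcd,
    degree_mul_comp_of_degree_eq_one _ (degree_X_add_C e), degree_X_add_C, add_comm]
  · simp only [degree_mul_comp_of_degree_eq_one _ (degree_X_add_C _), degree_X_add_C]
  · simp only [leadingCoeff_mul_comp_of_monic (monic_X_add_C _) (monic_X_add_C _)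
      (natDegree_X_add_C _)]

end Shift

theorem Polynomial.submodule_eq_top_of_one_mem_of_degree_raising {K : Type*} [Field K]
    {N : Submodule K K[X]} (T : K[X] → K[X]) (hT : ∀ f, (T f).degree = f.degree + 1)
    (hTN : ∀ f ∈ N, T f ∈ N) (h1 : (1 : K[X]) ∈ N) : N = ⊤ := by
  let S : Polynomial.Sequence K :=
    ⟨fun i ↦ T^[i] 1, fun i ↦ by
      induction i with
      | zero => simp
      | succ i ih => rw [Function.iterate_succ_apply', hT, ih]; rfl⟩
  have hSN : Set.range S ⊆ N := by
    rintro _ ⟨i, rfl⟩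
    induction i with
    | zero => exact h1
    | succ i ih =>
      change T^[i + 1] 1 ∈ N
      exact Function.iterate_succ_apply' T i 1 ▸ hTN _ ih
  rw [eq_top_iff, ← S.span fun i ↦ (leadingCoeff_ne_zero.2 (S.ne_zero i)).isUnit]
  exact Submodule.span_le.2 hSN

theorem Omega_module_generated_by_one_general
    {k : Type*} [Field k]
    (lam a : k) (hlam0 : lam ≠ 0) (hlam1 : lam ≠ 1) (hlamm1 : lam ≠ -1)
    (act : ℕ → Polynomial k → Polynomial k)
    (hact : ∀ (n : ℕ) (f : Polynomial k), act n f =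
      lam ^ n • ((Polynomial.X + Polynomial.C ((n : k) * a)) *
          f.comp (Polynomial.X + Polynomial.C (n : k)))
        - (lam ^ n)⁻¹ • ((Polynomial.X - Polynomial.C ((n : k) * a)) *
          f.comp (Polynomial.X - Polynomial.C (n : k)))) :
    ∀ N : Submodule k (Polynomial k),
      (∀ n : ℕ, 1 ≤ n → ∀ f ∈ N, act n f ∈ N) →
      (1 : Polynomial k) ∈ N → N = ⊤ := by
  intro N hN h1
  have hlam : lam ≠ lam⁻¹ := by
    rw [Ne, self_eq_inv₀]
    tauto
  have hact_one (f : k[X]) : act 1 f =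
      lam • ((X + C a) * f.comp (X + C 1)) - lam⁻¹ • ((X + C (-a)) * f.comp (X + C (-1))) := by
    simp only [hact, pow_one, Nat.cast_one, one_mul, C_neg, ← sub_eq_add_neg]
  refine submodule_eq_top_of_one_mem_of_degree_raising (act 1) (fun f ↦ ?_) (hN 1 le_rfl) h1
  rw [hact_one]
  exact degree_smul_sub_smul_X_add_C_mul_comp hlam _ _ _ _ f

/-- Let `k` be a field of characteristic zero, `lam ∈ k` with `lam ≠ 0, 1, -1`, and `a ∈ k` with
`a ≠ 0`.  `Ω(lam,a)` is the `O`-module with underlying space `k[X]` and action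
`O_n · f(X) = lamⁿ (X + n·a) f(X + n) − lam⁻ⁿ (X − n·a) f(X − n)` for `n ≥ 1`
(recorded by `act n f`; since `O` is spanned by the `O_n`, `n ≥ 1`, subspaces stable under all
`act n` are exactly the `O`-submodules).  Then `Ω(lam,a)` is generated by the constant
polynomial `1`: the smallest `O`-submodule containing `1` is all of `k[X]`, i.e.
`U(O)·1 = k[X]`. -/
theorem Omega_module_generated_by_one
    {k : Type*} [Field k] [CharZero k]
    (lam a : k) (hlam0 : lam ≠ 0) (hlam1 : lam ≠ 1) (hlamm1 : lam ≠ -1) (ha : a ≠ 0)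
    (act : ℕ → Polynomial k → Polynomial k)
    (hact : ∀ (n : ℕ) (f : Polynomial k), act n f =
      lam ^ n • ((Polynomial.X + Polynomial.C ((n : k) * a)) *
          f.comp (Polynomial.X + Polynomial.C (n : k)))
        - (lam ^ n)⁻¹ • ((Polynomial.X - Polynomial.C ((n : k) * a)) *
          f.comp (Polynomial.X - Polynomial.C (n : k)))) :
    ∀ N : Submodule k (Polynomial k),
      (∀ n : ℕ, 1 ≤ n → ∀ f ∈ N, act n f ∈ N) →
      (1 : Polynomial k) ∈ N → N = ⊤ :=
  Omega_module_generated_by_one_general lam a hlam0 hlam1 hlamm1 act hact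
end

section
/- Let λ = 1 or λ = −1 and let a ∈ k with a ≠ 0. For each n ∈ ℕ, the subspace Ω(λ,a)_n := {f(X) ∈ k[X] : deg f ≤ n} is an O-submodule of Ω(λ,a); in particular these submodules form an increasing filtration Ω(λ,a)_0 ⊆ Ω(λ,a)_1 ⊆ Ω(λ,a)_2 ⊆ ··· of Ω(λ,a) by proper submodules. -/
/-!
Both products `(X + na) f(X + n)` and `(X - na) f(X - n)` are a monic linear polynomial times `f`
composed with a monic linear shift, so each has degree `deg f + 1` and the leading coefficient of
`f`. For `λ = ±1` the two scalars `λⁿ` and `λ⁻ⁿ` coincide, so `O_n · f` is `λⁿ` times the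
difference of these products; the leading terms cancel and `O_n` does not raise the degree.
-/

open Polynomial

namespace Polynomial

section Shift

variable {R : Type*} [CommRing R] [IsDomain R]

theorem degree_comp_X_add_C (f : R[X]) (b : R) : (f.comp (X + C b)).degree = f.degree := by
  rw [degree_comp (by rw [degree_X_add_C]; exact zero_lt_one), degree_X_add_C, mul_one]

theorem leadingCoeff_comp_X_add_C (f : R[X]) (b : R) :
    (f.comp (X + C b)).leadingCoeff = f.leadingCoeff := by
  rw [leadingCoeff_comp (by rw [natDegree_X_add_C]; exact one_ne_zero),
    (monic_X_add_C b).leadingCoeff, one_pow, mul_one]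

theorem degree_X_add_C_mul_comp_X_add_C (c b : R) (f : R[X]) :
    ((X + C c) * f.comp (X + C b)).degree = 1 + f.degree := by
  rw [degree_mul, degree_X_add_C, degree_comp_X_add_C]

theorem leadingCoeff_X_add_C_mul_comp_X_add_C (c b : R) (f : R[X]) :
    ((X + C c) * f.comp (X + C b)).leadingCoeff = f.leadingCoeff := by
  rw [leadingCoeff_mul, (monic_X_add_C c).leadingCoeff, one_mul, leadingCoeff_comp_X_add_C]

theorem degree_X_add_C_mul_comp_sub_le (c₁ c₂ b₁ b₂ : R) (f : R[X]) :
    ((X + C c₁) * f.comp (X + C b₁) - (X + C c₂) * f.comp (X + C b₂)).degree ≤ f.degree := by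
  rcases eq_or_ne f 0 with rfl | hf
  · simp
  rw [degree_eq_natDegree hf]
  apply Order.le_of_lt_succ
  calc _ < ((X + C c₁) * f.comp (X + C b₁)).degree :=
        degree_sub_lt_left
          (by rw [degree_X_add_C_mul_comp_X_add_C, degree_X_add_C_mul_comp_X_add_C])
          (mul_ne_zero (X_add_C_ne_zero c₁) (comp_X_add_C_ne_zero_iff.mpr hf))
          (by rw [leadingCoeff_X_add_C_mul_comp_X_add_C, leadingCoeff_X_add_C_mul_comp_X_add_C])
    _ = (f.natDegree : WithBot ℕ) + 1 := by
        rw [degree_X_add_C_mul_comp_X_add_C, degree_eq_natDegree hf, add_comm]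

theorem degree_X_add_C_mul_comp_sub_X_sub_C_mul_comp_le (c b : R) (f : R[X]) :
    ((X + C c) * f.comp (X + C b) - (X - C c) * f.comp (X - C b)).degree ≤ f.degree := by
  simpa only [sub_eq_add_neg X, ← C_neg] using degree_X_add_C_mul_comp_sub_le c (-c) b (-b) f

end Shift

theorem degreeLE_ne_top {R : Type*} [Semiring R] [Nontrivial R] (n : ℕ) :
    degreeLE R n ≠ ⊤ := by
  intro h
  have hX : (X ^ (n + 1) : R[X]) ∈ degreeLE R n := h ▸ Submodule.mem_top
  rw [mem_degreeLE, degree_X_pow, Nat.cast_le] at hX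
  omega

end Polynomial

/-- The action of `O_n` on `Ω(lam, a) = k[X]`. -/
noncomputable def omegaAct {k : Type*} [Field k] (lam a : k) (n : ℕ) (f : k[X]) : k[X] :=
  lam ^ n • ((X + C ((n : k) * a)) * f.comp (X + C (n : k)))
    - (lam ^ n)⁻¹ • ((X - C ((n : k) * a)) * f.comp (X - C (n : k)))

theorem degree_omegaAct_le {k : Type*} [Field k] {lam : k} (hlam : lam⁻¹ = lam) (a : k) (n : ℕ)
    (f : k[X]) : (omegaAct lam a n f).degree ≤ f.degree := by
  rw [omegaAct, ← inv_pow, hlam, ← smul_sub]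
  exact (degree_smul_le _ _).trans (degree_X_add_C_mul_comp_sub_X_sub_C_mul_comp_le _ _ f)

theorem Omega_module_filtration_of_degree_submodules_general
    {k : Type*} [Field k]
    (lam a : k) (hlam : lam = 1 ∨ lam = -1)
    (act : ℕ → Polynomial k → Polynomial k)
    (hact : ∀ (n : ℕ) (f : Polynomial k), act n f =
      lam ^ n • ((Polynomial.X + Polynomial.C ((n : k) * a)) *
          f.comp (Polynomial.X + Polynomial.C (n : k)))
        - (lam ^ n)⁻¹ • ((Polynomial.X - Polynomial.C ((n : k) * a)) *
          f.comp (Polynomial.X - Polynomial.C (n : k)))) :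
    ∀ n : ℕ,
      (∀ m : ℕ, 1 ≤ m → ∀ f ∈ Polynomial.degreeLE k (n : ℕ),
        act m f ∈ Polynomial.degreeLE k (n : ℕ)) ∧
      Polynomial.degreeLE k (n : ℕ) ≠ ⊤ ∧
      Polynomial.degreeLE k (n : ℕ) ≤ Polynomial.degreeLE k ((n + 1 : ℕ)) := by
  have hlam_inv : lam⁻¹ = lam := by rcases hlam with rfl | rfl <;> norm_num
  intro n
  refine ⟨fun m _ f hf => ?_, degreeLE_ne_top n, degreeLE_mono (by exact_mod_cast n.le_succ)⟩
  rw [mem_degreeLE] at hf ⊢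
  exact hact m f ▸ (degree_omegaAct_le hlam_inv a m f).trans hf

/-- Let `k` be a field of characteristic zero, `lam = 1` or `lam = -1`, and `a ∈ k` with `a ≠ 0`.
`Ω(lam,a)` is the `O`-module with underlying space `k[X]` and action
`O_n · f(X) = lamⁿ (X + n·a) f(X + n) − lam⁻ⁿ (X − n·a) f(X − n)` for `n ≥ 1`
(recorded by `act n f`; since `O` is spanned by the `O_n`, `n ≥ 1`, subspaces stable under all
`act n` are exactly the `O`-submodules).  Then for each `n ∈ ℕ`, the subspace
`Ω(lam,a)_n = {f : deg f ≤ n}` is an `O`-submodule of `Ω(lam,a)`; in particular these proper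
submodules form an increasing filtration `Ω(lam,a)_0 ⊆ Ω(lam,a)_1 ⊆ ⋯` of `Ω(lam,a)`. -/
theorem Omega_module_filtration_of_degree_submodules
    {k : Type*} [Field k] [CharZero k]
    (lam a : k) (hlam : lam = 1 ∨ lam = -1) (ha : a ≠ 0)
    (act : ℕ → Polynomial k → Polynomial k)
    (hact : ∀ (n : ℕ) (f : Polynomial k), act n f =
      lam ^ n • ((Polynomial.X + Polynomial.C ((n : k) * a)) *
          f.comp (Polynomial.X + Polynomial.C (n : k)))
        - (lam ^ n)⁻¹ • ((Polynomial.X - Polynomial.C ((n : k) * a)) *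
          f.comp (Polynomial.X - Polynomial.C (n : k)))) :
    ∀ n : ℕ,
      (∀ m : ℕ, 1 ≤ m → ∀ f ∈ Polynomial.degreeLE k (n : ℕ),
        act m f ∈ Polynomial.degreeLE k (n : ℕ)) ∧
      Polynomial.degreeLE k (n : ℕ) ≠ ⊤ ∧
      Polynomial.degreeLE k (n : ℕ) ≤ Polynomial.degreeLE k ((n + 1 : ℕ)) :=
  Omega_module_filtration_of_degree_submodules_general lam a hlam act hact
end

section
/- For every λ ∈ k \ {0}, the subspace O(λ) is a Lie subalgebra of the Witt algebra W; its bracket satisfies [O_n^{(λ)}, O_m^{(λ)}] = (n−m) O_{n+m}^{(λ)} − λ^m (n+m) O_{n−m}^{(λ)} for all n, m ≥ 1 (interpreting O_0^{(λ)} = 0 and O_{−k}^{(λ)} = −λ^{−k} O_k^{(λ)} for k ≥ 1), and O(λ) is generated as a Lie algebra by the two elements O_1^{(λ)} and O_2^{(λ)}. -/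
private theorem witt_keyb
    {k : Type*} [Field k]
    {W : Type*} [LieRing W] [LieAlgebra k W]
    (L : ℤ → W)
    (hLbracket : ∀ n m : ℤ, ⁅L n, L m⁆ = ((n - m : ℤ) : k) • L (n + m))
    (lam : k) (hlam : lam ≠ 0) (n m : ℤ) :
      ⁅L n - lam ^ n • L (-n), L m - lam ^ m • L (-m)⁆ =
        ((n - m : ℤ) : k) • (L (n + m) - lam ^ (n + m) • L (-(n + m)))
          - (lam ^ m * ((n + m : ℤ) : k)) •
            (L (n - m) - lam ^ (n - m) • L (-(n - m))) := by
  have e2 : lam ^ n = lam ^ (n - m) * lam ^ m := by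
    rw [← zpow_add₀ hlam]; ring_nf
  have e1 : lam ^ (n + m) = lam ^ (n - m) * lam ^ m * lam ^ m := by
    rw [← zpow_add₀ hlam, ← zpow_add₀ hlam]; ring_nf
  rw [sub_lie, lie_sub, lie_sub, lie_smul, lie_smul, smul_lie, smul_lie, smul_smul,
    hLbracket, hLbracket, hLbracket, hLbracket,
    show n + -m = n - m from by ring, show -n + m = -(n - m) from by ring,
    show -n + -m = -(n + m) from by ring, e1, e2]
  push_cast
  module

private theorem witt_memO
    {k : Type*} [Field k]
    {W : Type*} [LieRing W] [LieAlgebra k W]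
    (L : ℤ → W) (lam : k) (hlam : lam ≠ 0) (p : ℤ) :
    L p - lam ^ p • L (-p) ∈
      Submodule.span k {x : W | ∃ n : ℤ, 1 ≤ n ∧ x = L n - lam ^ n • L (-n)} := by
  rcases lt_trichotomy p 0 with hp | hp | hp
  · have h : L p - lam ^ p • L (-p)
        = (-(lam ^ p)) • (L (-p) - lam ^ (-p) • L (-(-p))) := by
      have : lam ^ p * lam ^ (-p) = 1 := by
        rw [← zpow_add₀ hlam, add_neg_cancel, zpow_zero]
      rw [smul_sub, smul_smul, neg_mul, neg_neg, this]
      module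
    rw [h]
    exact Submodule.smul_mem _ _ (Submodule.subset_span ⟨-p, by omega, rfl⟩)
  · subst hp
    simp
  · exact Submodule.subset_span ⟨p, by omega, rfl⟩

private theorem witt_genNat
    {k : Type*} [Field k] [CharZero k]
    {W : Type*} [LieRing W] [LieAlgebra k W]
    (L : ℤ → W)
    (lam : k)
    (keyb : ∀ n m : ℤ, ⁅L n - lam ^ n • L (-n), L m - lam ^ m • L (-m)⁆ =
        ((n - m : ℤ) : k) • (L (n + m) - lam ^ (n + m) • L (-(n + m)))
          - (lam ^ m * ((n + m : ℤ) : k)) •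
            (L (n - m) - lam ^ (n - m) • L (-(n - m)))) :
    ∀ N : ℕ, L ((N:ℤ)+1) - lam ^ ((N:ℤ)+1) • L (-((N:ℤ)+1)) ∈
      LieSubalgebra.lieSpan k W
        {L 1 - lam ^ (1 : ℤ) • L (-1), L 2 - lam ^ (2 : ℤ) • L (-2)} := by
  set P := LieSubalgebra.lieSpan k W
        {L 1 - lam ^ (1 : ℤ) • L (-1), L 2 - lam ^ (2 : ℤ) • L (-2)} with hP
  intro N
  induction N using Nat.strong_induction_on with
  | _ N IH =>
    match N with
    | 0 =>
      simp only [Nat.cast_zero, zero_add]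
      exact LieSubalgebra.subset_lieSpan (Set.mem_insert _ _)
    | 1 =>
      rw [show ((1:ℕ):ℤ)+1 = 2 by norm_num]
      exact LieSubalgebra.subset_lieSpan (Set.mem_insert_of_mem _ rfl)
    | (m+2) =>
      have h1 : L ((m:ℤ)+1) - lam ^ ((m:ℤ)+1) • L (-((m:ℤ)+1)) ∈ P := by
        have := IH m (by omega); exact this
      have h2 : L ((m:ℤ)+2) - lam ^ ((m:ℤ)+2) • L (-((m:ℤ)+2)) ∈ P := by
        have := IH (m+1) (by omega)
        push_cast at this
        rwa [show (m:ℤ)+1+1 = (m:ℤ)+2 by ring] at this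
      have hO1 : L 1 - lam ^ (1:ℤ) • L (-1) ∈ P :=
        LieSubalgebra.subset_lieSpan (Set.mem_insert _ _)
      have hk := keyb ((m:ℤ)+2) 1
      rw [show ((m:ℤ)+2)-1 = (m:ℤ)+1 by ring] at hk
      set c : k := (((m:ℤ)+1 : ℤ) : k) with hc
      have hcne : c ≠ 0 := by
        rw [hc]; exact_mod_cast (by positivity : ((m:ℤ)+1 : ℤ) ≠ 0)
      set d : k := lam ^ (1:ℤ) * ((((m:ℤ)+2)+1 : ℤ) : k) with hd
      have hmem : c • (L (((m:ℤ)+2)+1) - lam ^ (((m:ℤ)+2)+1) • L (-(((m:ℤ)+2)+1))) ∈ P := by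
        have he : c • (L (((m:ℤ)+2)+1) - lam ^ (((m:ℤ)+2)+1) • L (-(((m:ℤ)+2)+1)))
            = ⁅L ((m:ℤ)+2) - lam ^ ((m:ℤ)+2) • L (-((m:ℤ)+2)),
               L 1 - lam ^ (1:ℤ) • L (-1)⁆
              + d • (L ((m:ℤ)+1) - lam ^ ((m:ℤ)+1) • L (-((m:ℤ)+1))) := by
          rw [hk]; module
        rw [he]
        exact P.add_mem (P.lie_mem h2 hO1) (P.smul_mem _ h1)
      have := P.smul_mem c⁻¹ hmem
      rw [inv_smul_smul₀ hcne] at this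
      push_cast
      convert this using 3

/-- Let `k` be a field of characteristic zero and `W` the Witt algebra (basis `L n`, `n : ℤ`,
with `⁅L n, L m⁆ = (n-m) • L (n+m)`).  For `lam ∈ k`, `lam ≠ 0`, set
`O_n^{(lam)} := L n - lamⁿ • L (-n)` (for all `n : ℤ`; note `O_0^{(lam)} = 0` and
`O_{-n}^{(lam)} = -lam⁻ⁿ • O_n^{(lam)}` hold automatically).  Then the span of
`{O_n^{(lam)} : n ≥ 1}` is a Lie subalgebra `O(lam)` of `W`; its bracket satisfies
`⁅O_n^{(lam)}, O_m^{(lam)}⁆ = (n−m) • O_{n+m}^{(lam)} − lam^m (n+m) • O_{n−m}^{(lam)}` for all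
`n, m ≥ 1`; and `O(lam)` is generated as a Lie algebra by `O_1^{(lam)}` and `O_2^{(lam)}`. -/
theorem O_lam_subalgebra_bracket_and_generators
    {k : Type*} [Field k] [CharZero k]
    {W : Type*} [LieRing W] [LieAlgebra k W]
    (L : ℤ → W)
    (hLindep : LinearIndependent k L)
    (hLspan : Submodule.span k (Set.range L) = ⊤)
    (hLbracket : ∀ n m : ℤ, ⁅L n, L m⁆ = ((n - m : ℤ) : k) • L (n + m))
    (lam : k) (hlam : lam ≠ 0) :
    (∃ H : LieSubalgebra k W,
      (H : Submodule k W) =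
        Submodule.span k {x : W | ∃ n : ℤ, 1 ≤ n ∧ x = L n - lam ^ n • L (-n)} ∧
      LieSubalgebra.lieSpan k W
        {L 1 - lam ^ (1 : ℤ) • L (-1), L 2 - lam ^ (2 : ℤ) • L (-2)} = H) ∧
    ∀ n m : ℤ, 1 ≤ n → 1 ≤ m →
      ⁅L n - lam ^ n • L (-n), L m - lam ^ m • L (-m)⁆ =
        ((n - m : ℤ) : k) • (L (n + m) - lam ^ (n + m) • L (-(n + m)))
          - (lam ^ m * ((n + m : ℤ) : k)) •
            (L (n - m) - lam ^ (n - m) • L (-(n - m))) := by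
  have keyb := witt_keyb L hLbracket lam hlam
  refine ⟨?_, fun n m _ _ => keyb n m⟩
  set S : Set W := {x : W | ∃ n : ℤ, 1 ≤ n ∧ x = L n - lam ^ n • L (-n)} with hS
  have hclosed : ∀ x y : W, x ∈ Submodule.span k S → y ∈ Submodule.span k S →
      ⁅x, y⁆ ∈ Submodule.span k S := by
    intro x y hx hy
    induction hx, hy using Submodule.span_induction₂ with
    | mem_mem a b ha hb =>
      obtain ⟨n, hn, rfl⟩ := ha
      obtain ⟨m, hm, rfl⟩ := hb
      rw [keyb n m]
      exact Submodule.sub_mem _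
        (Submodule.smul_mem _ _ (witt_memO L lam hlam _))
        (Submodule.smul_mem _ _ (witt_memO L lam hlam _))
    | zero_left b hb => simp
    | zero_right a ha => simp
    | add_left a₁ a₂ b _ _ _ h1 h2 => rw [add_lie]; exact Submodule.add_mem _ h1 h2
    | add_right a b₁ b₂ _ _ _ h1 h2 => rw [lie_add]; exact Submodule.add_mem _ h1 h2
    | smul_left r a b _ _ h => rw [smul_lie]; exact Submodule.smul_mem _ _ h
    | smul_right r a b _ _ h => rw [lie_smul]; exact Submodule.smul_mem _ _ h
  refine ⟨⟨Submodule.span k S, fun {x y} hx hy => hclosed x y hx hy⟩, rfl, ?_⟩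
  apply le_antisymm
  · apply (LieSubalgebra.lieSpan_le).2
    rintro x (rfl | rfl)
    · exact Submodule.subset_span ⟨1, le_refl 1, rfl⟩
    · exact Submodule.subset_span ⟨2, by norm_num, rfl⟩
  · intro x hx
    have hgen := witt_genNat L lam keyb
    have hsub : S ⊆ (LieSubalgebra.lieSpan k W
        {L 1 - lam ^ (1 : ℤ) • L (-1), L 2 - lam ^ (2 : ℤ) • L (-2)} : Set W) := by
      rintro _ ⟨n, hn, rfl⟩
      have := hgen (n-1).toNat
      rw [Int.toNat_of_nonneg (by omega)] at this
      rwa [show (n:ℤ)-1+1 = n by ring] at this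
    exact Submodule.span_le.2 hsub hx
end

section
/- For every λ ∈ k \ {0}, the family {u_n^{(λ)} : n ≥ 1}, where u_n^{(λ)} := −(t + λt⁻¹)^{n−1}(t² − λ) d/dt, is a basis of O(λ), and [u_n^{(λ)}, u_m^{(λ)}] = (n−m)(u_{n+m}^{(λ)} − 4λ·u_{n+m−2}^{(λ)}) for all n, m ≥ 1 (with u_0^{(λ)} := 0). Consequently, O(λ) is isomorphic as a Lie algebra to the subalgebra (t² − 4λ)·k[t]·d/dt of the one-sided Witt algebra Der(k[t]), via the change of variables sending u_n^{(λ)} to −t^{n−1}(t² − 4λ) d/dt. -/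
/-!
Write `D a` for `−t^{a−1}(t² − λ) d/dt = L a − λ L (a − 2)`. Since
`(t + λt⁻¹)^n = t^n (1 + λt⁻²)^n`, `u_{n+1} = Σ_s p_s D (n + 1 − 2s)` with `p = (1 + λX)^n`. In this encoding the bracket becomes
polynomial arithmetic, and `(1 − λX)² = (1 + λX)² − 4λX` yields
`[u_n, u_m] = (n − m)(u_{n+m} − 4λ u_{n+m−2})`: the structure constants of `(t² − 4λ)k[t] d/dt`
in its basis `−t^{n−1}(t² − 4λ) d/dt`. Both families are triangular with respect to the bases `L`
and `ℓ`, hence linearly independent, so matching them is an isomorphism of the Lie algebras they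
span. Finally `u_1 = O_1`, `u_2 = O_2`, and in either family every later member is a combination of
`[x_1, x_{n−1}]` and `x_{n−2}`, so each family lies in the Lie algebra spanned by the other.
-/

open Polynomial

section Triangular

variable {k M ι : Type*} [Field k] [AddCommGroup M] [Module k M] [LinearOrder ι]

theorem linearIndependent_of_triangular (w : ι → M) (φ : ι → Module.Dual k M)
    (hlt : ∀ i j, i < j → φ j (w i) = 0) (hdiag : ∀ i, φ i (w i) ≠ 0) :
    LinearIndependent k w := by
  rw [linearIndependent_iff]
  intro l hl
  by_contra hne
  have hsupp : l.support.Nonempty := Finsupp.support_nonempty_iff.mpr hne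
  set m := l.support.max' hsupp
  have hm : l m ≠ 0 := Finsupp.mem_support_iff.mp (l.support.max'_mem hsupp)
  have key := congrArg (φ m) hl
  rw [Finsupp.linearCombination_apply, Finsupp.sum, map_sum, map_zero,
    Finset.sum_eq_single m (fun j hj hjm => by
      rw [map_smul, hlt j m (lt_of_le_of_ne (l.support.le_max' j hj) hjm), smul_zero])
      (fun h => absurd (l.support.max'_mem hsupp) h), map_smul, smul_eq_mul] at key
  exact mul_ne_zero hm (hdiag m) key

end Triangular

section LieSpan

variable {k A B : Type*} [CommRing k] [LieRing A] [LieAlgebra k A] [LieRing B] [LieAlgebra k B]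

theorem lie_mem_span_of_forall {s : Set A} (hs : ∀ x ∈ s, ∀ y ∈ s, ⁅x, y⁆ ∈ Submodule.span k s)
    {x y : A} (hx : x ∈ Submodule.span k s) (hy : y ∈ Submodule.span k s) :
    ⁅x, y⁆ ∈ Submodule.span k s := by
  induction hx, hy using Submodule.span_induction₂ with
  | mem_mem x y hx hy => exact hs x hx y hy
  | zero_left y _ => simp
  | zero_right x _ => simp
  | add_left x y z _ _ _ hx hy => simpa only [add_lie] using add_mem hx hy
  | add_right x y z _ _ _ hx hy => simpa only [lie_add] using add_mem hx hy
  | smul_left r x y _ _ h => simpa only [smul_lie] using Submodule.smul_mem _ r h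
  | smul_right r x y _ _ h => simpa only [lie_smul] using Submodule.smul_mem _ r h

def LieSubalgebra.ofSpan (s : Set A) (hs : ∀ x ∈ s, ∀ y ∈ s, ⁅x, y⁆ ∈ Submodule.span k s) :
    LieSubalgebra k A :=
  { Submodule.span k s with lie_mem' := lie_mem_span_of_forall hs }

def LinearEquiv.toLieEquivOfBasis {ι : Type*} (e : A ≃ₗ[k] B) (b : Module.Basis ι k A)
    (h : ∀ i j, e ⁅b i, b j⁆ = ⁅e (b i), e (b j)⁆) : A ≃ₗ⁅k⁆ B :=
  { e with
    map_lie' := fun {x y} => by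
      have hB : (LieModule.toEnd k A A : A →ₗ[k] Module.End k A).compr₂ e.toLinearMap =
          (LieModule.toEnd k B B : B →ₗ[k] Module.End k B).compl₁₂ e.toLinearMap e.toLinearMap :=
        LinearMap.ext_basis b b h
      simpa using LinearMap.congr_fun₂ hB x y }

theorem LieSubalgebra.mem_of_lie_recurrence (S : LieSubalgebra k A) {x : ℕ → A}
    (h1 : x 1 ∈ S) (h2 : x 2 ∈ S)
    (hrec : ∀ n, ∃ a b : k, x (n + 3) = a • ⁅x 1, x (n + 2)⁆ + b • x (n + 1)) (n : ℕ) :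
    x (n + 1) ∈ S := by
  induction n using Nat.strong_induction_on with
  | _ n ih =>
    match n, ih with
    | 0, _ => exact h1
    | 1, _ => exact h2
    | n + 2, ih =>
      obtain ⟨a, b, hx⟩ := hrec n
      rw [hx]
      exact add_mem (S.smul_mem a (S.lie_mem (ih 0 (by omega)) (ih (n + 1) (by omega))))
        (S.smul_mem b (ih n (by omega)))

end LieSpan

section

variable {k A B : Type*} [Field k] [LieRing A] [LieAlgebra k A] [LieRing B] [LieAlgebra k B]

/-- The structure constants of `(t² − c)k[t] d/dt` in the basis `x n = −t^{n−1}(t² − c) d/dt`. -/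
def BracketRelation (c : k) (x : ℕ → A) : Prop :=
  ∀ n m : ℕ, ⁅x (n + 1), x (m + 1)⁆ = ((n : k) - m) • (x (n + m + 2) - c • x (n + m))

namespace BracketRelation

variable {c : k} {x : ℕ → A}

theorem lie_eq_of_ne (hx : BracketRelation c x) {n m d : ℕ} (hd : n + m = d + 1) :
    ⁅x (n + 1), x (m + 1)⁆ = ((n : k) - m) • (x (d + 3) - c • x (d + 1)) := by
  rw [hx, hd]

theorem lie_eq (hx : BracketRelation c x) {n m : ℕ} (hn : 1 ≤ n) (hm : 1 ≤ m) :
    ⁅x n, x m⁆ = (((n : ℤ) - (m : ℤ)) : k) • (x (n + m) - c • x (n + m - 2)) := by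
  obtain ⟨a, rfl⟩ := Nat.exists_eq_add_of_le' hn
  obtain ⟨b, rfl⟩ := Nat.exists_eq_add_of_le' hm
  rw [hx, show a + 1 + (b + 1) = a + b + 2 by omega, Nat.add_sub_cancel]
  push_cast
  ring_nf

theorem recurrence [CharZero k] (hx : BracketRelation c x) (n : ℕ) :
    x (n + 3) = (-((n : k) + 1))⁻¹ • ⁅x 1, x (n + 2)⁆ + c • x (n + 1) := by
  have hne : -((n : k) + 1) ≠ 0 := neg_ne_zero.mpr n.cast_add_one_ne_zero
  rw [show x 1 = x (0 + 1) from rfl, show x (n + 2) = x ((n + 1) + 1) from rfl, hx,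
    show ((0 : ℕ) : k) - ((n + 1 : ℕ) : k) = -((n : k) + 1) by push_cast; ring,
    inv_smul_smul₀ hne]
  simp only [zero_add, show n + 1 + 2 = n + 3 from rfl]
  abel

theorem lie_mem_span (hx : BracketRelation c x) :
    ∀ a ∈ Set.range (fun n => x (n + 1)), ∀ b ∈ Set.range (fun n => x (n + 1)),
      ⁅a, b⁆ ∈ Submodule.span k (Set.range fun n => x (n + 1)) := by
  rintro _ ⟨n, rfl⟩ _ ⟨m, rfl⟩
  rcases eq_or_ne n m with rfl | hnm
  · simp
  obtain ⟨d, hd⟩ : ∃ d, n + m = d + 1 := ⟨n + m - 1, by omega⟩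
  rw [hx.lie_eq_of_ne hd]
  exact Submodule.smul_mem _ _ (sub_mem (Submodule.subset_span ⟨d + 2, rfl⟩)
    (Submodule.smul_mem _ _ (Submodule.subset_span ⟨d, rfl⟩)))

def lieSubalgebra (hx : BracketRelation c x) : LieSubalgebra k A :=
  LieSubalgebra.ofSpan _ hx.lie_mem_span

theorem exists_lieEquiv (hx : BracketRelation c x) {y : ℕ → B} (hy : BracketRelation c y)
    (hxi : LinearIndependent k fun n => x (n + 1)) (hyi : LinearIndependent k fun n => y (n + 1)) :
    ∃ e : hx.lieSubalgebra ≃ₗ⁅k⁆ hy.lieSubalgebra, ∀ n : ℕ, 1 ≤ n →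
      ∀ (a : hx.lieSubalgebra) (b : hy.lieSubalgebra), (a : A) = x n → (b : B) = y n → e a = b := by
  let bX : Module.Basis ℕ k hx.lieSubalgebra := .span hxi
  let bY : Module.Basis ℕ k hy.lieSubalgebra := .span hyi
  have hbX (i : ℕ) : (bX i : A) = x (i + 1) := Module.Basis.coe_span_apply hxi i
  have hby (i : ℕ) : (bY i : B) = y (i + 1) := Module.Basis.coe_span_apply hyi i
  let e := bX.equiv bY (Equiv.refl ℕ)
  have he (i : ℕ) : e (bX i) = bY i := bX.equiv_apply i bY _
  refine ⟨e.toLieEquivOfBasis bX fun i j => ?_, ?_⟩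
  · -- for `i = j = 0` the relation would involve `x 0`, which need not lie in the span
    rcases eq_or_ne i j with rfl | hij
    · simp
    obtain ⟨d, hd⟩ : ∃ d, i + j = d + 1 := ⟨i + j - 1, by omega⟩
    have hxb : ⁅bX i, bX j⁆ = ((i : k) - j) • (bX (d + 2) - c • bX d) :=
      Subtype.ext (by simpa [hbX] using hx.lie_eq_of_ne hd)
    have hyb : ⁅bY i, bY j⁆ = ((i : k) - j) • (bY (d + 2) - c • bY d) :=
      Subtype.ext (by simpa [hby] using hy.lie_eq_of_ne hd)
    rw [hxb, he, he, hyb, map_smul, map_sub, map_smul, he, he]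
  · intro n hn a b ha hb
    obtain ⟨i, rfl⟩ := Nat.exists_eq_add_of_le' hn
    obtain rfl : a = bX i := Subtype.ext (ha.trans (hbX i).symm)
    obtain rfl : b = bY i := Subtype.ext (hb.trans (hby i).symm)
    exact he i

end BracketRelation

end

section DescendingSum

variable {k W : Type*} [CommRing k] [LieRing W] [LieAlgebra k W]

noncomputable def descendingSum (D : ℤ → W) (K : ℤ) : k[X] →ₗ[k] W :=
  Polynomial.lsum fun s => LinearMap.toSpanSingleton k W (D (K - 2 * s))

theorem descendingSum_monomial (D : ℤ → W) (K : ℤ) (s : ℕ) (a : k) :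
    descendingSum D K (monomial s a) = a • D (K - 2 * s) := by
  simp [descendingSum]

theorem descendingSum_X_mul (D : ℤ → W) (K : ℤ) (p : k[X]) :
    descendingSum D K (X * p) = descendingSum D (K - 2) p := by
  induction p using Polynomial.induction_on' with
  | add p q hp hq => rw [mul_add, map_add, map_add, hp, hq]
  | monomial s a =>
    rw [X_mul_monomial, descendingSum_monomial, descendingSum_monomial]
    congr 2
    push_cast
    ring

noncomputable def weightOp (K : ℤ) : k[X] →ₗ[k] k[X] :=
  (K : k) • LinearMap.id - (2 : k) • (LinearMap.mulLeft k X ∘ₗ derivative)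

theorem weightOp_monomial (K : ℤ) (s : ℕ) (a : k) :
    weightOp K (monomial s a) = monomial s (((K : k) - 2 * s) * a) := by
  cases s with
  | zero => simp [weightOp]
  | succ s =>
    simp only [weightOp, LinearMap.sub_apply, LinearMap.smul_apply, LinearMap.id_apply,
      LinearMap.comp_apply, derivative_monomial, LinearMap.mulLeft_apply, X_mul_monomial,
      smul_monomial, Nat.add_sub_cancel]
    rw [← map_sub]
    congr 1
    push_cast
    ring

theorem lie_descendingSum {lam : k} {D : ℤ → W}
    (hD : ∀ a b : ℤ, ⁅D a, D b⁆ = ((a - b : ℤ) : k) • (D (a + b) - lam • D (a + b - 2)))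
    (K M : ℤ) (p q : k[X]) :
    ⁅descendingSum D K p, descendingSum D M q⁆ =
      descendingSum D (K + M) ((1 - C lam * X) * (weightOp K p * q - p * weightOp M q)) := by
  induction p using Polynomial.induction_on' with
  | add p r hp hr =>
    rw [map_add, add_lie, hp, hr, ← map_add, (weightOp K).map_add]
    congr 1
    ring
  | monomial s a =>
    induction q using Polynomial.induction_on' with
    | add q r hq hr =>
      rw [map_add, lie_add, hq, hr, ← map_add, (weightOp M).map_add]
      congr 1
      ring
    | monomial t c =>
      rw [descendingSum_monomial, descendingSum_monomial, lie_smul, smul_lie, hD,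
        weightOp_monomial, weightOp_monomial, monomial_mul_monomial, monomial_mul_monomial,
        ← map_sub, sub_mul, one_mul, mul_assoc (C lam), X_mul_monomial, C_mul_monomial, map_sub,
        descendingSum_monomial, descendingSum_monomial]
      push_cast
      ring_nf
      module

end DescendingSum

section PolynomialIdentities

variable {k : Type*} [Field k]

theorem one_add_C_mul_X_pow (a : k) (n : ℕ) :
    (1 + C a * X) ^ n = ∑ j ∈ Finset.range (n + 1), monomial j ((n.choose j : k) * a ^ j) := by
  rw [add_comm, add_pow]
  refine Finset.sum_congr rfl fun j _ => ?_
  rw [one_pow, mul_one, mul_pow, ← C_pow, mul_comm, ← mul_assoc, ← C_eq_natCast, ← C_mul,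
    C_mul_X_pow_eq_monomial, mul_comm]

theorem mul_weightOp_pow (a : k) (n : ℕ) :
    (1 + C a * X) * weightOp ((n : ℤ) + 1) ((1 + C a * X) ^ n) =
      (1 + C a * X) ^ n * ((n : k[X]) + 1 + (1 - (n : k[X])) * C a * X) := by
  have hder : (1 + C a * X) * derivative ((1 + C a * X) ^ n) =
      (n : k[X]) * C a * (1 + C a * X) ^ n := by
    cases n with
    | zero => simp
    | succ n =>
      rw [derivative_pow_succ, derivative_add, derivative_one, derivative_C_mul_X]
      simp only [map_add, map_natCast, map_one, Nat.cast_succ]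
      ring
  simp only [weightOp, LinearMap.sub_apply, LinearMap.smul_apply, LinearMap.id_apply,
    LinearMap.comp_apply, LinearMap.mulLeft_apply, smul_eq_C_mul, Int.cast_add, Int.cast_natCast,
    Int.cast_one, map_add, map_one, map_natCast, C_ofNat]
  linear_combination (-2 * X) * hder

theorem one_sub_C_mul_X_mul_weightOp_pow (a : k) {n m N : ℕ} (h : n + m = N + 1) :
    (1 - C a * X) * (weightOp ((n : ℤ) + 1) ((1 + C a * X) ^ n) * (1 + C a * X) ^ m -
        (1 + C a * X) ^ n * weightOp ((m : ℤ) + 1) ((1 + C a * X) ^ m)) =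
      ((n : k) - m) • ((1 + C a * X) ^ (n + m + 1) - (4 * a) • (X * (1 + C a * X) ^ N)) := by
  have hp : 1 + C a * X ≠ 0 := fun h0 => by simpa using congrArg (eval 0) h0
  have hpow : (1 + C a * X) ^ n * (1 + C a * X) ^ m = (1 + C a * X) * (1 + C a * X) ^ N := by
    rw [← pow_add, h, pow_succ']
  -- cancelling `1 + aX` avoids the truncated exponent `n − 1` coming from `derivative_pow`
  apply mul_left_cancel₀ hp
  simp only [smul_eq_C_mul, map_sub, map_mul, map_natCast, C_ofNat]
  linear_combination ((1 - C a * X) * (1 + C a * X) ^ m) * mul_weightOp_pow a n -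
    ((1 - C a * X) * (1 + C a * X) ^ n) * mul_weightOp_pow a m -
    (((n : k[X]) - m) * 4 * C a * X) * hpow

end PolynomialIdentities

section WittAlgebra

variable {k W : Type*} [Field k] [LieRing W] [LieAlgebra k W]

def wittO (L : ℤ → W) (lam : k) (a : ℤ) : W := L a - lam ^ a • L (-a)

def wittD (L : ℤ → W) (lam : k) (a : ℤ) : W := L a - lam • L (a - 2)

noncomputable def wittU (L : ℤ → W) (lam : k) (n : ℕ) : W :=
  ∑ j ∈ Finset.range n, ((((n - 1).choose j : ℕ) : k) * lam ^ j) • wittD L lam (n - 2 * j)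

variable {L : ℤ → W} {lam : k}

theorem wittO_neg (hlam : lam ≠ 0) (a : ℤ) :
    wittO L lam (-a) = -(lam ^ (-a)) • wittO L lam a := by
  have h : lam ^ (-a) * lam ^ a = 1 := by rw [← zpow_add₀ hlam, neg_add_cancel, zpow_zero]
  simp only [wittO, neg_neg, smul_sub, smul_smul, neg_mul, h, neg_smul, one_smul]
  abel

theorem lie_wittO (hL : ∀ n m : ℤ, ⁅L n, L m⁆ = ((n - m : ℤ) : k) • L (n + m))
    (hlam : lam ≠ 0) (a b : ℤ) :
    ⁅wittO L lam a, wittO L lam b⁆ =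
      ((a - b : ℤ) : k) • wittO L lam (a + b) +
        ((a + b : ℤ) : k) • lam ^ a • wittO L lam (b - a) := by
  have h1 := hL a b
  have h2 := hL a (-b)
  have h3 := hL (-a) b
  have h4 := hL (-a) (-b)
  rw [show a + -b = a - b by ring] at h2
  rw [show -a + b = b - a by ring] at h3
  rw [show -a + -b = -(a + b) by ring] at h4
  have e1 : lam ^ (a + b) = lam ^ a * lam ^ b := zpow_add₀ hlam a b
  have e2 : lam ^ a * lam ^ (b - a) = lam ^ b := by rw [← zpow_add₀ hlam, add_sub_cancel]
  simp only [wittO, lie_sub, sub_lie, lie_smul, smul_lie, h1, h2, h3, h4, smul_sub, smul_smul,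
    e1, e2, neg_sub]
  push_cast
  module

theorem wittO_mem_span (hlam : lam ≠ 0) (a : ℤ) :
    wittO L lam a ∈ Submodule.span k {x | ∃ n : ℤ, 1 ≤ n ∧ x = wittO L lam n} := by
  rcases lt_trichotomy a 0 with ha | rfl | ha
  · rw [← neg_neg a, wittO_neg hlam]
    exact Submodule.smul_mem _ _ (Submodule.subset_span ⟨-a, by omega, rfl⟩)
  · simp [wittO]
  · exact Submodule.subset_span ⟨a, ha, rfl⟩

def wittOSubalgebra (hL : ∀ n m : ℤ, ⁅L n, L m⁆ = ((n - m : ℤ) : k) • L (n + m))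
    (hlam : lam ≠ 0) : LieSubalgebra k W :=
  LieSubalgebra.ofSpan {x | ∃ n : ℤ, 1 ≤ n ∧ x = wittO L lam n} <| by
    rintro _ ⟨a, -, rfl⟩ _ ⟨b, -, rfl⟩
    rw [lie_wittO hL hlam]
    exact add_mem (Submodule.smul_mem _ _ (wittO_mem_span hlam _))
      (Submodule.smul_mem _ _ (Submodule.smul_mem _ _ (wittO_mem_span hlam _)))

theorem wittO_add_three [CharZero k] (hL : ∀ n m : ℤ, ⁅L n, L m⁆ = ((n - m : ℤ) : k) • L (n + m))
    (hlam : lam ≠ 0) (n : ℕ) :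
    wittO L lam (n + 3) = (-((n : k) + 1))⁻¹ • ⁅wittO L lam 1, wittO L lam (n + 2)⁆ +
      (((n : k) + 3) * lam / ((n : k) + 1)) • wittO L lam (n + 1) := by
  rw [lie_wittO hL hlam, show (1 : ℤ) + (n + 2) = n + 3 by ring,
    show (n : ℤ) + 2 - 1 = n + 1 by ring, zpow_one]
  push_cast
  match_scalars
  · field_simp
    ring
  · field_simp
    ring

theorem lie_wittD (hL : ∀ n m : ℤ, ⁅L n, L m⁆ = ((n - m : ℤ) : k) • L (n + m)) (a b : ℤ) :
    ⁅wittD L lam a, wittD L lam b⁆ =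
      ((a - b : ℤ) : k) • (wittD L lam (a + b) - lam • wittD L lam (a + b - 2)) := by
  have h2 := hL a (b - 2)
  have h3 := hL (a - 2) b
  have h4 := hL (a - 2) (b - 2)
  rw [show a + (b - 2) = a + b - 2 by ring] at h2
  rw [show a - 2 + b = a + b - 2 by ring] at h3
  rw [show a - 2 + (b - 2) = a + b - 2 - 2 by ring] at h4
  simp only [wittD, lie_sub, sub_lie, lie_smul, smul_lie, hL a b, h2, h3, h4]
  push_cast
  module

theorem wittU_succ (n : ℕ) :
    wittU L lam (n + 1) = descendingSum (wittD L lam) ((n : ℤ) + 1) ((1 + C lam * X) ^ n) := by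
  rw [wittU, one_add_C_mul_X_pow, map_sum]
  refine Finset.sum_congr rfl fun j _ => ?_
  rw [descendingSum_monomial, Nat.add_sub_cancel]
  push_cast
  rfl

theorem bracketRelation_wittU (hL : ∀ n m : ℤ, ⁅L n, L m⁆ = ((n - m : ℤ) : k) • L (n + m)) :
    BracketRelation (4 * lam) (wittU L lam) := by
  intro n m
  rcases eq_or_ne n m with rfl | hnm
  · simp
  obtain ⟨N, hN⟩ : ∃ N, n + m = N + 1 := ⟨n + m - 1, by omega⟩
  have hK : (n : ℤ) + 1 + ((m : ℤ) + 1) = ((n + m + 1 : ℕ) : ℤ) + 1 := by push_cast; ring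
  have hK' : (n : ℤ) + 1 + ((m : ℤ) + 1) - 2 = (N : ℤ) + 1 := by omega
  rw [wittU_succ, wittU_succ, lie_descendingSum (lie_wittD hL),
    one_sub_C_mul_X_mul_weightOp_pow lam hN, map_smul, map_sub, map_smul, descendingSum_X_mul,
    hK', hK, ← wittU_succ, ← wittU_succ, ← hN]

theorem wittU_one : wittU L lam 1 = wittO L lam 1 := by
  simp [wittU, wittD, wittO]

theorem wittU_two : wittU L lam 2 = wittO L lam 2 := by
  simp only [wittU, wittD, wittO, Finset.sum_range_succ, Finset.sum_range_zero]
  norm_num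
  module

theorem coord_wittU_succ (b : Module.Basis ℤ k W) (hb : ∀ a, b a = L a) {i j : ℕ} (hij : i ≤ j) :
    b.coord ((j : ℤ) + 1) (wittU L lam (i + 1)) = if i = j then 1 else 0 := by
  have hcoord (a : ℤ) : b.coord ((j : ℤ) + 1) (L a) = if a = (j : ℤ) + 1 then 1 else 0 := by
    rw [← hb, Module.Basis.coord_apply, Module.Basis.repr_self, Finsupp.single_apply, eq_comm]
  rw [wittU, Finset.sum_range_succ', map_add, map_sum, Finset.sum_eq_zero fun s hs => ?_]
  · simp only [wittD, map_smul, map_sub, hcoord]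
    have hlow : ((i + 1 : ℕ) : ℤ) - 2 * ((0 : ℕ) : ℤ) - 2 ≠ (j : ℤ) + 1 := by omega
    rw [if_neg hlow]
    simp
  · have := Finset.mem_range.mp hs
    simp only [wittD, map_smul, map_sub, hcoord]
    rw [if_neg (by omega), if_neg (by omega)]
    simp

theorem linearIndependent_wittU (hLindep : LinearIndependent k L)
    (hLspan : Submodule.span k (Set.range L) = ⊤) :
    LinearIndependent k fun n => wittU L lam (n + 1) := by
  let b := Module.Basis.mk hLindep hLspan.ge
  have hb (a : ℤ) : b a = L a := Module.Basis.mk_apply _ _ a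
  refine linearIndependent_of_triangular _ (fun j => b.coord ((j : ℤ) + 1)) (fun i j hij => ?_)
    (fun i => ?_)
  · simp [coord_wittU_succ b hb hij.le, hij.ne]
  · simp [coord_wittU_succ b hb le_rfl]

theorem span_wittU [CharZero k] (hL : ∀ n m : ℤ, ⁅L n, L m⁆ = ((n - m : ℤ) : k) • L (n + m))
    (hlam : lam ≠ 0) :
    Submodule.span k (Set.range fun n => wittU L lam (n + 1)) =
      Submodule.span k {x | ∃ n : ℤ, 1 ≤ n ∧ x = wittO L lam n} := by
  have hU := bracketRelation_wittU (lam := lam) hL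
  apply le_antisymm <;> rw [Submodule.span_le]
  · rintro _ ⟨n, rfl⟩
    refine (wittOSubalgebra hL hlam).mem_of_lie_recurrence ?_ ?_
      (fun n => ⟨_, _, hU.recurrence n⟩) n
    · rw [wittU_one]
      exact Submodule.subset_span ⟨1, le_rfl, rfl⟩
    · rw [wittU_two]
      exact Submodule.subset_span ⟨2, one_le_two, rfl⟩
  · rintro _ ⟨n, hn, rfl⟩
    obtain ⟨n, rfl⟩ : ∃ m : ℕ, n = m + 1 := ⟨(n - 1).toNat, by omega⟩
    refine hU.lieSubalgebra.mem_of_lie_recurrence (x := fun n : ℕ => wittO L lam n) ?_ ?_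
      (fun n => ⟨_, _, by push_cast; exact wittO_add_three hL hlam n⟩) n
    · rw [Nat.cast_one, ← wittU_one]
      exact Submodule.subset_span ⟨0, rfl⟩
    · rw [Nat.cast_two, ← wittU_two]
      exact Submodule.subset_span ⟨1, rfl⟩

end WittAlgebra

section OneSidedWitt

variable {k W : Type*} [Field k] [LieRing W] [LieAlgebra k W] {ℓ : ℕ → W}

def wittG (ℓ : ℕ → W) (c : k) (n : ℕ) : W := ℓ (n + 1) - c • ℓ (n - 1)

theorem bracketRelation_wittG
    (hℓ : ∀ i j : ℕ, ⁅ℓ i, ℓ j⁆ = (((i : ℤ) - (j : ℤ)) : k) • ℓ (i + j - 1)) (c : k) :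
    BracketRelation c (wittG ℓ c) := by
  intro a b
  have e1 := hℓ (a + 2) (b + 2)
  have e2 := hℓ (a + 2) b
  have e3 := hℓ a (b + 2)
  rw [show a + 2 + (b + 2) - 1 = a + b + 3 by omega] at e1
  rw [show a + 2 + b - 1 = a + b + 1 by omega] at e2
  rw [show a + (b + 2) - 1 = a + b + 1 by omega] at e3
  simp only [wittG, Nat.add_sub_cancel, show a + b + 2 + 1 = a + b + 3 from rfl, lie_sub, sub_lie,
    lie_smul, smul_lie, e1, e2, e3, hℓ a b]
  push_cast
  module

theorem linearIndependent_wittG (hℓindep : LinearIndependent k ℓ)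
    (hℓspan : Submodule.span k (Set.range ℓ) = ⊤) (c : k) :
    LinearIndependent k fun n => wittG ℓ c (n + 1) := by
  let b := Module.Basis.mk hℓindep hℓspan.ge
  have hcoord (i j : ℕ) : b.coord j (ℓ i) = if i = j then 1 else 0 := by
    rw [← Module.Basis.mk_apply hℓindep hℓspan.ge, Module.Basis.coord_apply,
      Module.Basis.repr_self, Finsupp.single_apply]
  refine linearIndependent_of_triangular _ (fun j => b.coord (j + 2)) (fun i j hij => ?_)
    (fun i => ?_)
  · simp only [wittG, Nat.add_sub_cancel, map_sub, map_smul, hcoord]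
    rw [if_neg (by omega), if_neg (by omega), smul_zero, sub_zero]
  · simp only [wittG, Nat.add_sub_cancel, map_sub, map_smul, hcoord]
    simp

end OneSidedWitt

/-- Let `k` be a field of characteristic zero, `W` the Witt algebra (basis `L n`, `n : ℤ`,
`⁅L n, L m⁆ = (n-m) • L (n+m)`), and `lam ∈ k`, `lam ≠ 0`.
`O(lam)` is the Lie subalgebra of `W` spanned by `{O_n^{(lam)} := L n - lamⁿ • L (-n) : n ≥ 1}`.
For `n ≥ 1`, the element `u_n^{(lam)} := −(t + lam·t⁻¹)^{n−1}(t² − lam) d/dt` expands in the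
basis `L` as `u n = Σ_{j<n} C(n−1,j)·lam^j • (L (n−2j) − lam • L (n−2j−2))` (hypothesis `hu`).
`W1` is the one-sided Witt algebra `Der(k[t])`, with (shifted) basis `ℓ i` (`i : ℕ`)
corresponding to `L_{i−1}`, so `⁅ℓ i, ℓ j⁆ = (i−j) • ℓ (i+j−1)`; for `n ≥ 1`,
`g n := ℓ (n+1) − 4·lam • ℓ (n−1)` corresponds to `−t^{n−1}(t² − 4·lam) d/dt`, and the span of
`{g n : n ≥ 1}` is the subalgebra `(t² − 4·lam)·k[t]·d/dt`.
Then `{u n : n ≥ 1}` is a basis of `O(lam)`, the bracket satisfies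
`⁅u n, u m⁆ = (n−m) • (u (n+m) − 4·lam • u (n+m−2))` for `n, m ≥ 1`, and `O(lam)` is isomorphic
as a Lie algebra to `(t² − 4·lam)·k[t]·d/dt` via the change of variables sending `u n ↦ g n`. -/
theorem O_lam_new_basis_and_iso_to_submodule_subalgebra
    {k : Type*} [Field k] [CharZero k]
    {W : Type*} [LieRing W] [LieAlgebra k W]
    (L : ℤ → W)
    (hLindep : LinearIndependent k L)
    (hLspan : Submodule.span k (Set.range L) = ⊤)
    (hLbracket : ∀ n m : ℤ, ⁅L n, L m⁆ = ((n - m : ℤ) : k) • L (n + m))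
    (lam : k) (hlam : lam ≠ 0)
    (u : ℕ → W)
    (hu : ∀ n : ℕ, u n = ∑ j ∈ Finset.range n,
      ((((n - 1).choose j : ℕ) : k) * lam ^ j) •
        (L ((n : ℤ) - 2 * j) - lam • L ((n : ℤ) - 2 * j - 2)))
    {W1 : Type*} [LieRing W1] [LieAlgebra k W1]
    (ℓ : ℕ → W1)
    (hℓindep : LinearIndependent k ℓ)
    (hℓspan : Submodule.span k (Set.range ℓ) = ⊤)
    (hℓbracket : ∀ i j : ℕ, ⁅ℓ i, ℓ j⁆ = (((i : ℤ) - (j : ℤ)) : k) • ℓ (i + j - 1))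
    (g : ℕ → W1)
    (hg : ∀ n : ℕ, g n = ℓ (n + 1) - (4 * lam) • ℓ (n - 1)) :
    -- `{u n : n ≥ 1}` is a basis of `O(lam)`
    LinearIndependent k (fun n : ℕ => u (n + 1)) ∧
    Submodule.span k (Set.range fun n : ℕ => u (n + 1)) =
      Submodule.span k {x : W | ∃ n : ℤ, 1 ≤ n ∧ x = L n - lam ^ n • L (-n)} ∧
    -- the bracket in the new basis
    (∀ n m : ℕ, 1 ≤ n → 1 ≤ m →
      ⁅u n, u m⁆ = (((n : ℤ) - (m : ℤ)) : k) • (u (n + m) - (4 * lam) • u (n + m - 2))) ∧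
    -- `O(lam) ≅ (t² − 4·lam)·k[t]·d/dt` via `u n ↦ g n`
    (∃ (H : LieSubalgebra k W) (T : LieSubalgebra k W1),
      (H : Submodule k W) =
        Submodule.span k {x : W | ∃ n : ℤ, 1 ≤ n ∧ x = L n - lam ^ n • L (-n)} ∧
      (T : Submodule k W1) = Submodule.span k (Set.range fun n : ℕ => g (n + 1)) ∧
      ∃ e : (↥H) ≃ₗ⁅k⁆ (↥T),
        ∀ n : ℕ, 1 ≤ n → ∀ (x : ↥H) (y : ↥T),
          (x : W) = u n → (y : W1) = g n → e x = y) := by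
  obtain rfl : u = wittU L lam := funext hu
  obtain rfl : g = wittG ℓ (4 * lam) := funext hg
  have hU := bracketRelation_wittU (lam := lam) hLbracket
  have hG := bracketRelation_wittG hℓbracket (4 * lam)
  have hUindep := linearIndependent_wittU (lam := lam) hLindep hLspan
  have hspan := span_wittU hLbracket hlam
  exact ⟨hUindep, hspan, fun n m hn hm => hU.lie_eq hn hm, hU.lieSubalgebra, hG.lieSubalgebra,
    hspan, rfl, hU.exists_lieEquiv hG hUindep (linearIndependent_wittG hℓindep hℓspan _)⟩
end

section
/- For every λ ∈ k \ {0}, the Lie algebra O(λ) is not perfect: the derived subalgebra [O(λ), O(λ)] is a proper subspace of O(λ). In particular, O(λ) is not a simple Lie algebra. -/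
/-!
If `μ² = λ`, every `O_n^{(λ)}` vanishes at the fixed points `±μ` of `t ↦ λ / t`, and on the
vector fields `g d/dt` vanishing at a point `p` the map `g d/dt ↦ g'(p)` is a Lie algebra
character. The combination `(g'(-μ) - g'(μ)) / 4μ` sends `O_n^{(λ)}` to `n λ^{(n-1)/2}` for odd `n`
and to `0` for even `n`. These values make sense without `μ`, and the bracket relation
`[O_n, O_m] = (n - m) O_{n+m} - (n + m) λ^m O_{n-m}` shows directly that they define a character
of `O(λ)`; it takes the value `1` on `O_1`, so `O(λ)` is neither perfect nor simple.
-/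

namespace LieAlgebra

variable {R L : Type*} [CommRing R] [LieRing L] [LieAlgebra R L]

theorem IsSimple.derivedSeries_one_eq_top [IsSimple R L] : derivedSeries R L 1 = ⊤ := by
  refine (IsSimple.eq_bot_or_eq_top _).resolve_left fun h ↦
    IsSimple.non_abelian R (L := L) ⟨fun x y ↦ ?_⟩
  have hxy : ⁅x, y⁆ ∈ derivedSeries R L 1 := by
    rw [derivedSeries_def, derivedSeriesOfIdeal_succ, derivedSeriesOfIdeal_zero]
    exact LieSubmodule.lie_mem_lie (LieSubmodule.mem_top x) (LieSubmodule.mem_top y)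
  rwa [h, LieSubmodule.mem_bot] at hxy

theorem derivedSeries_one_ne_top_of_lieCharacter (χ : LieCharacter R L) {x : L}
    (hx : χ x ≠ 0) : derivedSeries R L 1 ≠ ⊤ :=
  fun h ↦ hx (lieCharacter_apply_of_mem_derived χ (h ▸ LieSubmodule.mem_top x))

def lieCharacterOfMapLieEqZero (φ : Module.Dual R L) (hφ : ∀ x y : L, φ ⁅x, y⁆ = 0) :
    LieCharacter R L :=
  letI := LieRing.ofAssociativeRing (A := R)
  { φ with
    map_lie' := fun {x y} ↦ by
      rw [LieRing.of_associative_ring_bracket, mul_comm, sub_self]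
      exact hφ x y }

end LieAlgebra

theorem LinearMap.map_lie_eq_zero_of_mem_span {R L M : Type*} [CommRing R] [LieRing L]
    [LieAlgebra R L] [AddCommGroup M] [Module R M] (φ : L →ₗ[R] M) {S : Set L}
    (hS : ∀ x ∈ S, ∀ y ∈ S, φ ⁅x, y⁆ = 0) {x y : L} (hx : x ∈ Submodule.span R S)
    (hy : y ∈ Submodule.span R S) : φ ⁅x, y⁆ = 0 :=
  LinearMap.BilinMap.apply_apply_mem_of_mem_span (LinearMap.ker φ) S S
    (LieModule.toEnd R L L : L →ₗ[R] Module.End R L) hS x y hx hy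

theorem LinearIndependent.exists_linearMap_apply_eq {K V M ι : Type*} [DivisionRing K]
    [AddCommGroup V] [Module K V] [AddCommGroup M] [Module K M] {v : ι → V}
    (hv : LinearIndependent K v) (f : ι → M) : ∃ φ : V →ₗ[K] M, ∀ i, φ (v i) = f i := by
  obtain ⟨φ, hφ⟩ := LinearMap.exists_extend (Finsupp.linearCombination K f ∘ₗ hv.repr)
  refine ⟨φ, fun i ↦ ?_⟩
  have := congr($hφ ⟨v i, Submodule.subset_span ⟨i, rfl⟩⟩)
  rw [LinearMap.comp_apply, LinearMap.comp_apply, hv.repr_eq_single i _ rfl] at this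
  simpa using this

section OLambda

variable {k W : Type*} [Field k] [LieRing W] [LieAlgebra k W]

/-- `O_n^{(λ)}`, indexed by `n : ℕ` so that `λ ^ n` is a monoid power; `oGen L lam 0 = 0`. -/
def oGen (L : ℤ → W) (lam : k) (n : ℕ) : W := L n - lam ^ n • L (-n)

theorem lie_oGen_oGen {L : ℤ → W} (hL : ∀ n m : ℤ, ⁅L n, L m⁆ = ((n - m : ℤ) : k) • L (n + m))
    (lam : k) {m n : ℕ} (hmn : m ≤ n) :
    ⁅oGen L lam n, oGen L lam m⁆ =
      ((n : k) - m) • oGen L lam (n + m) - ((n + m : k) * lam ^ m) • oGen L lam (n - m) := by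
  have hpow : lam ^ m * lam ^ (n - m) = lam ^ n := pow_mul_pow_sub lam hmn
  simp only [oGen, lie_sub, sub_lie, lie_smul, smul_lie, hL, smul_sub, smul_smul]
  push_cast [hmn]
  rw [show (n : ℤ) + -m = n - m by ring, show -(n : ℤ) + m = -(n - m) by ring,
    show -(n : ℤ) + -m = -(n + m) by ring, mul_assoc _ (lam ^ m), hpow, pow_add]
  module

def oddWeight (lam : k) (j : ℕ) : k := if Odd j then j * lam ^ (j / 2) else 0

theorem sub_mul_oddWeight_add (lam : k) {m n : ℕ} (hmn : m ≤ n) :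
    ((n : k) - m) * oddWeight lam (n + m) = (n + m) * lam ^ m * oddWeight lam (n - m) := by
  by_cases hodd : Odd (n + m)
  · have hodd' : Odd (n - m) := by
      rcases hodd with ⟨r, hr⟩; exact ⟨r - m, by omega⟩
    have hexp : (n + m) / 2 = m + (n - m) / 2 := by rcases hodd with ⟨r, hr⟩; omega
    rw [oddWeight, if_pos hodd, oddWeight, if_pos hodd', hexp, pow_add]
    push_cast [hmn]
    ring
  · have heven : ¬ Odd (n - m) := by
      rintro ⟨r, hr⟩; exact hodd ⟨r + m, by omega⟩
    rw [oddWeight, if_neg hodd, oddWeight, if_neg heven, mul_zero, mul_zero]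

theorem map_oGen_eq_oddWeight {L : ℤ → W} (lam : k) {φ : W →ₗ[k] k}
    (hφ : ∀ j, φ (L j) = oddWeight lam j.toNat) (n : ℕ) : φ (oGen L lam n) = oddWeight lam n := by
  simp [oGen, hφ, oddWeight]

theorem map_lie_oGen_oGen_eq_zero {L : ℤ → W}
    (hL : ∀ n m : ℤ, ⁅L n, L m⁆ = ((n - m : ℤ) : k) • L (n + m)) (lam : k) {φ : W →ₗ[k] k}
    (hφ : ∀ j, φ (L j) = oddWeight lam j.toNat) (n m : ℕ) :
    φ ⁅oGen L lam n, oGen L lam m⁆ = 0 := by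
  wlog hmn : m ≤ n generalizing m n
  · rw [← lie_skew, map_neg, this m n (by omega), neg_zero]
  rw [lie_oGen_oGen hL lam hmn, map_sub, map_smul, map_smul, map_oGen_eq_oddWeight lam hφ,
    map_oGen_eq_oddWeight lam hφ, smul_eq_mul, smul_eq_mul, sub_mul_oddWeight_add lam hmn,
    sub_self]

end OLambda

theorem O_lam_not_perfect_not_simple_general
    {k : Type*} [Field k]
    {W : Type*} [LieRing W] [LieAlgebra k W]
    (L : ℤ → W)
    (hLindep : LinearIndependent k L)
    (hLbracket : ∀ n m : ℤ, ⁅L n, L m⁆ = ((n - m : ℤ) : k) • L (n + m))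
    (lam : k)
    (H : LieSubalgebra k W)
    (hH : (H : Submodule k W) =
      Submodule.span k {x : W | ∃ n : ℤ, 1 ≤ n ∧ x = L n - lam ^ n • L (-n)}) :
    LieAlgebra.derivedSeries k (↥H) 1 ≠ ⊤ ∧ ¬ LieAlgebra.IsSimple k (↥H) := by
  -- `j.toNat = 0` for `j ≤ 0`, so `φ` vanishes on the `L_j` with `j ≤ 0`.
  obtain ⟨φ, hφ⟩ := hLindep.exists_linearMap_apply_eq fun j ↦ oddWeight lam j.toNat
  have hgen : ∀ n : ℤ, 1 ≤ n → L n - lam ^ n • L (-n) = oGen L lam n.toNat := by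
    intro n hn
    lift n to ℕ using by omega
    simp [oGen]
  set S := {x : W | ∃ n : ℤ, 1 ≤ n ∧ x = L n - lam ^ n • L (-n)}
  have hφS : ∀ x ∈ S, ∀ y ∈ S, φ ⁅x, y⁆ = 0 := by
    rintro _ ⟨n, hn, rfl⟩ _ ⟨m, hm, rfl⟩
    rw [hgen n hn, hgen m hm]
    exact map_lie_oGen_oGen_eq_zero hLbracket lam hφ _ _
  have hmem : ∀ x : H, (x : W) ∈ Submodule.span k S := fun x ↦ hH ▸ x.2
  let χ := LieAlgebra.lieCharacterOfMapLieEqZero (φ ∘ₗ (H : Submodule k W).subtype)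
    fun x y ↦ φ.map_lie_eq_zero_of_mem_span hφS (hmem x) (hmem y)
  have hO₁ : oGen L lam 1 ∈ H := by
    rw [← LieSubalgebra.mem_toSubmodule, hH]
    exact Submodule.subset_span ⟨1, le_rfl, by simp [oGen]⟩
  have hχ : χ ⟨_, hO₁⟩ = 1 := (map_oGen_eq_oddWeight lam hφ 1).trans (by simp [oddWeight])
  have hne := LieAlgebra.derivedSeries_one_ne_top_of_lieCharacter χ (hχ ▸ one_ne_zero)
  exact ⟨hne, fun _ ↦ hne LieAlgebra.IsSimple.derivedSeries_one_eq_top⟩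

/-- Let `k` be a field of characteristic zero, `W` the Witt algebra (basis `L n`, `n : ℤ`,
`⁅L n, L m⁆ = (n-m) • L (n+m)`), and `lam ∈ k`, `lam ≠ 0`.  `O(lam)` is the Lie subalgebra of
`W` spanned by `{L n - lamⁿ • L (-n) : n ≥ 1}`.  Then `O(lam)` is not perfect — its derived
subalgebra `⁅O(lam), O(lam)⁆` (the first term of the derived series) is a proper subspace —
and in particular `O(lam)` is not a simple Lie algebra. -/
theorem O_lam_not_perfect_not_simple
    {k : Type*} [Field k] [CharZero k]
    {W : Type*} [LieRing W] [LieAlgebra k W]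
    (L : ℤ → W)
    (hLindep : LinearIndependent k L)
    (hLspan : Submodule.span k (Set.range L) = ⊤)
    (hLbracket : ∀ n m : ℤ, ⁅L n, L m⁆ = ((n - m : ℤ) : k) • L (n + m))
    (lam : k) (hlam : lam ≠ 0)
    (H : LieSubalgebra k W)
    (hH : (H : Submodule k W) =
      Submodule.span k {x : W | ∃ n : ℤ, 1 ≤ n ∧ x = L n - lam ^ n • L (-n)}) :
    LieAlgebra.derivedSeries k (↥H) 1 ≠ ⊤ ∧ ¬ LieAlgebra.IsSimple k (↥H) :=
  O_lam_not_perfect_not_simple_general L hLindep hLbracket lam H hH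
end

section
/- For all n ≥ 1, the element u_n := −(t + t⁻¹)^{n−1}(t² − 1) d/dt of the Witt algebra satisfies u_n = O_n + Σ_{k=1}^{⌊n/2⌋} binom(n,k)·(1 − 2k/n)·O_{n−2k}, where O_0 := 0 and binom(n,k)·(1 − 2k/n) = binom(n−1,k) − binom(n−1,k−1) is an integer. -/
/-!
With `g j = L (n - 2 j)` the expansion of `u n` is `∑ C(n-1, j) (g j - g (j+1))`; summation by
parts turns it into `∑_{j ≤ n} c j • g j` with `c j = C(n-1, j) - C(n-1, j-1)`. By the symmetry of
binomial coefficients `c (n - j) = -c j`, while `n - 2 j` changes sign under `j ↦ n - j`, so the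
terms pair up into `c j • O_{n-2j}` for `j ≤ n / 2`. Pascal's rule and `j C(n, j) = n C(n-1, j-1)`
give `c j = C(n, j) (1 - 2 j / n)`.
-/

open Finset

/-- `C(m, j) - C(m, j - 1)`, read with `C(m, -1) = 0`. -/
def chooseDiff (m : ℕ) : ℕ → ℤ
  | 0 => 1
  | j + 1 => m.choose (j + 1) - m.choose j

theorem chooseDiff_antisymm (m j : ℕ) (hj : j ≤ m + 1) :
    chooseDiff m (m + 1 - j) = -chooseDiff m j := by
  rcases j with _ | i
  · simp [chooseDiff, Nat.choose_succ_self]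
  rcases Nat.lt_or_ge i m with hi | hi
  · obtain ⟨l, hl⟩ : ∃ l, m - i = l + 1 := ⟨m - i - 1, by omega⟩
    have h1 : m.choose (l + 1) = m.choose i := by rw [← hl, Nat.choose_symm hi.le]
    have h2 : m.choose l = m.choose (i + 1) := by
      rw [show l = m - (i + 1) by omega, Nat.choose_symm hi]
    simp [show m + 1 - (i + 1) = l + 1 by omega, chooseDiff, h1, h2]
  · obtain rfl : i = m := by omega
    simp [chooseDiff, Nat.choose_succ_self]

section

variable {M : Type*} [AddCommGroup M]

theorem sum_range_smul_sub_succ {R : Type*} [Ring R] [Module R M] (a : ℕ → R) (g : ℕ → M)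
    (n : ℕ) :
    ∑ j ∈ range n, a j • (g j - g (j + 1)) =
      a 0 • g 0 + ∑ j ∈ range n, (a (j + 1) - a j) • g (j + 1) - a n • g n := by
  induction n with
  | zero => simp
  | succ n ih =>
    rw [sum_range_succ, ih, sum_range_succ, smul_sub, sub_smul]
    abel

theorem sum_range_zsmul_eq_sum_half_of_antisymm (f : ℤ → M) :
    ∀ (n : ℕ) (c : ℕ → ℤ), (∀ j ≤ n, c (n - j) = -c j) →
      ∑ j ∈ range (n + 1), c j • f (n - 2 * j) =
        ∑ j ∈ range (n / 2 + 1), c j • (f (n - 2 * j) - f (-(n - 2 * j)))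
  | 0, c, hc => by
    have : c 0 = 0 := by linarith [hc 0 le_rfl]
    simp [this]
  | 1, c, hc => by
    have : c 1 = -c 0 := hc 0 zero_le_one
    simp [sum_range_succ, this, sub_eq_add_neg]
  | n + 2, c, hc => by
    have ih := sum_range_zsmul_eq_sum_half_of_antisymm f n (fun j => c (j + 1)) fun j hj => by
      simpa [show n + 2 - (j + 1) = n - j + 1 by omega] using hc (j + 1) (by omega)
    rw [sum_range_succ', sum_range_succ, show (n + 2) / 2 + 1 = n / 2 + 1 + 1 by omega,
      sum_range_succ' _ (n / 2 + 1)]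
    have hshift : ∀ j : ℕ, ((n + 2 : ℕ) : ℤ) - 2 * ((j + 1 : ℕ) : ℤ) = n - 2 * j := by
      intro j; push_cast; ring
    have hlast : (n : ℤ) - 2 * ((n + 1 : ℕ) : ℤ) = -((n + 2 : ℕ) : ℤ) := by
      push_cast; ring
    have hc_last : c (n + 1 + 1) = -c 0 := hc 0 (by omega)
    simp only [hshift, ih, hlast, hc_last, neg_smul, smul_sub, Nat.cast_zero, mul_zero, sub_zero]
    abel

theorem sum_range_choose_zsmul_sub_succ (m : ℕ) (g : ℕ → M) :
    ∑ j ∈ range (m + 1), (m.choose j : ℤ) • (g j - g (j + 1)) =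
      ∑ j ∈ range (m + 2), chooseDiff m j • g j := by
  rw [sum_range_smul_sub_succ, sum_range_succ' _ (m + 1)]
  simp [chooseDiff, Nat.choose_succ_self, add_comm]

end

theorem cast_choose_succ_mul_one_sub {K : Type*} [Field K] [CharZero K] (m j : ℕ) :
    ((m + 1).choose (j + 1) : K) * (1 - 2 * ((j + 1 : ℕ) : K) / ((m + 1 : ℕ) : K)) =
      (m.choose (j + 1) : K) - (m.choose j : K) := by
  have hpascal : ((m + 1).choose (j + 1) : K) = m.choose j + m.choose (j + 1) := by
    exact_mod_cast Nat.choose_succ_succ m j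
  have habsorb : ((m + 1 : ℕ) : K) * m.choose j = (m + 1).choose (j + 1) * ((j + 1 : ℕ) : K) := by
    exact_mod_cast Nat.add_one_mul_choose_eq m j
  have hm : ((m + 1 : ℕ) : K) ≠ 0 := Nat.cast_ne_zero.mpr m.succ_ne_zero
  field_simp
  linear_combination ((m + 1 : ℕ) : K) * hpascal + 2 * habsorb

theorem u_n_in_terms_of_O_basis_general
    {k : Type*} [Field k] [CharZero k]
    {W : Type*} [LieRing W] [LieAlgebra k W]
    (L : ℤ → W)
    (u : ℕ → W)
    (hu : ∀ n : ℕ, u n = ∑ j ∈ Finset.range n,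
      (((n - 1).choose j : ℕ) : k) • (L ((n : ℤ) - 2 * j) - L ((n : ℤ) - 2 * j - 2))) :
    ∀ n : ℕ, 1 ≤ n →
      (u n = (L (n : ℤ) - L (-(n : ℤ))) +
        ∑ j ∈ Finset.Icc 1 (n / 2),
          ((n.choose j : k) * (1 - 2 * (j : k) / (n : k))) •
            (L ((n : ℤ) - 2 * j) - L (-((n : ℤ) - 2 * j)))) ∧
      ∀ j ∈ Finset.Icc 1 (n / 2),
        (n.choose j : k) * (1 - 2 * (j : k) / (n : k)) =
          (((n - 1).choose j : ℕ) : k) - (((n - 1).choose (j - 1) : ℕ) : k) := by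
  intro n hn
  obtain ⟨m, rfl⟩ : ∃ m, n = m + 1 := ⟨n - 1, by omega⟩
  have hcoef : ∀ j ∈ Icc 1 ((m + 1) / 2),
      ((m + 1).choose j : k) * (1 - 2 * (j : k) / ((m + 1 : ℕ) : k)) =
        (m.choose j : k) - (m.choose (j - 1) : k) := by
    intro j hj
    obtain ⟨i, rfl⟩ : ∃ i, j = i + 1 := ⟨j - 1, by simp only [mem_Icc] at hj; omega⟩
    exact cast_choose_succ_mul_one_sub m i
  refine ⟨?_, hcoef⟩
  calc u (m + 1)
      = ∑ j ∈ range (m + 1), (m.choose j : ℤ) •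
          (L ((m + 1 : ℕ) - 2 * j) - L ((m + 1 : ℕ) - 2 * (j + 1 : ℕ))) := by
        rw [hu, Nat.add_sub_cancel]
        refine sum_congr rfl fun j _ => ?_
        rw [← Int.cast_smul_eq_zsmul k, Int.cast_natCast]
        congr 3
        push_cast
        ring
    _ = ∑ j ∈ range (m + 2), chooseDiff m j • L ((m + 1 : ℕ) - 2 * j) :=
        sum_range_choose_zsmul_sub_succ m _
    _ = ∑ j ∈ range ((m + 1) / 2 + 1),
          chooseDiff m j • (L ((m + 1 : ℕ) - 2 * j) - L (-((m + 1 : ℕ) - 2 * j))) :=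
        sum_range_zsmul_eq_sum_half_of_antisymm L (m + 1) _ (chooseDiff_antisymm m)
    _ = _ := by
        rw [sum_range_eq_add_Ico _ (by omega), Ico_add_one_right_eq_Icc]
        congr 1
        · simp [chooseDiff]
        refine sum_congr rfl fun j hj => ?_
        obtain ⟨i, rfl⟩ : ∃ i, j = i + 1 := ⟨j - 1, by simp only [mem_Icc] at hj; omega⟩
        rw [hcoef _ hj, ← Int.cast_smul_eq_zsmul k]
        simp [chooseDiff]

/-- Let `k` be a field of characteristic zero and `W` the Witt algebra (basis `L n`, `n : ℤ`,
`⁅L n, L m⁆ = (n-m) • L (n+m)`); set `O_n := L n - L (-n)` (so `O_0 = 0` automatically).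
For `n ≥ 1` the element `u_n := −(t + t⁻¹)^{n−1}(t² − 1) d/dt` of `W` expands in the basis `L`
as `u n = Σ_{j<n} C(n−1,j) • (L (n−2j) − L (n−2j−2))` (hypothesis `hu`).  Then for all `n ≥ 1`,
`u n = O_n + Σ_{j=1}^{⌊n/2⌋} C(n,j)(1 − 2j/n) • O_{n−2j}`, and each coefficient
`C(n,j)(1 − 2j/n)` equals the integer `C(n−1,j) − C(n−1,j−1)`. -/
theorem u_n_in_terms_of_O_basis
    {k : Type*} [Field k] [CharZero k]
    {W : Type*} [LieRing W] [LieAlgebra k W]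
    (L : ℤ → W)
    (hLindep : LinearIndependent k L)
    (hLspan : Submodule.span k (Set.range L) = ⊤)
    (hLbracket : ∀ n m : ℤ, ⁅L n, L m⁆ = ((n - m : ℤ) : k) • L (n + m))
    (u : ℕ → W)
    (hu : ∀ n : ℕ, u n = ∑ j ∈ Finset.range n,
      (((n - 1).choose j : ℕ) : k) • (L ((n : ℤ) - 2 * j) - L ((n : ℤ) - 2 * j - 2))) :
    ∀ n : ℕ, 1 ≤ n →
      (u n = (L (n : ℤ) - L (-(n : ℤ))) +
        ∑ j ∈ Finset.Icc 1 (n / 2),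
          ((n.choose j : k) * (1 - 2 * (j : k) / (n : k))) •
            (L ((n : ℤ) - 2 * j) - L (-((n : ℤ) - 2 * j)))) ∧
      ∀ j ∈ Finset.Icc 1 (n / 2),
        (n.choose j : k) * (1 - 2 * (j : k) / (n : k)) =
          (((n - 1).choose j : ℕ) : k) - (((n - 1).choose (j - 1) : ℕ) : k) :=
  u_n_in_terms_of_O_basis_general L u hu
end
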